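/- arXiv:2303.13795 — 7 statements merged into one kernel-verified Lean document; each statement's English description precedes it below -/
import Mathlib

section
/- Under the setup, suppose Z is conditionally independent of (D₁, D₀) given W and P(Z = 1, W = w) > 0 for a given w ∈ {0,1}. Then P(D = 0 | Z = 1, W = w) = P(NT | W = w), i.e., the probability of being a never taker given W = w equals the observed probability of non-treatment among those with Z = 1 and W = w. -/
/-! On `{Z = 1}` the observed treatment is `D₁`, and by monotonicity `D₁ = 0` forces `D₀ = 0`, so
`{D = 0}` and `NT` agree there up to a null set; conditional independence given `W = w` then lets us
drop the conditioning on `Z = 1`. -/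

open MeasureTheory ProbabilityTheory

/-- `pr μ A` is the probability of the event `A`, as a real number. -/
noncomputable def pr {Ω : Type*} [MeasurableSpace Ω] (μ : Measure Ω) (A : Set Ω) : ℝ :=
  (μ A).toReal

/-- `prCond μ A B` is the conditional probability `P(A | B) = P(A ∩ B) / P(B)`. -/
noncomputable def prCond {Ω : Type*} [MeasurableSpace Ω] (μ : Measure Ω) (A B : Set Ω) : ℝ :=
  pr μ (A ∩ B) / pr μ B

/-- `cexp μ A f` is the conditional expectation `E[f | A]` of `f` given the event `A`. -/
noncomputable def cexp {Ω : Type*} [MeasurableSpace Ω] (μ : Measure Ω) (A : Set Ω)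
    (f : Ω → ℝ) : ℝ :=
  ∫ ω, f ω ∂(μ[|A])

/-- The event `{ω | f ω = c}`. -/
def evEq {Ω : Type*} (f : Ω → ℝ) (c : ℝ) : Set Ω := {ω | f ω = c}

/-- Always takers: `D₁ = D₀ = 1`. -/
def ATset {Ω : Type*} (D1 D0 : Ω → ℝ) : Set Ω := {ω | D1 ω = 1 ∧ D0 ω = 1}

/-- Never takers: `D₁ = D₀ = 0`. -/
def NTset {Ω : Type*} (D1 D0 : Ω → ℝ) : Set Ω := {ω | D1 ω = 0 ∧ D0 ω = 0}

/-- Compliers: `D₁ = 1`, `D₀ = 0`. -/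
def CPset {Ω : Type*} (D1 D0 : Ω → ℝ) : Set Ω := {ω | D1 ω = 1 ∧ D0 ω = 0}

lemma pr_eq_measureReal {Ω : Type*} [MeasurableSpace Ω] (μ : Measure Ω) (A : Set Ω) :
    pr μ A = μ.real A :=
  rfl

lemma prCond_congr_left_of_inter_ae_eq {Ω : Type*} [MeasurableSpace Ω] {μ : Measure Ω}
    {A A' B : Set Ω} (h : (A ∩ B : Set Ω) =ᵐ[μ] (A' ∩ B : Set Ω)) :
    prCond μ A B = prCond μ A' B := by
  simp only [prCond, pr, measure_congr h]

section ConditionalIndependence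

variable {Ω α β : Type*} [MeasurableSpace Ω] [MeasurableSpace α] [MeasurableSpace β]
  {μ : Measure Ω} [IsFiniteMeasure μ] {X : Ω → α} {Y : Ω → β} {s : Set Ω}

lemma prCond_preimage_inter_eq_of_indepFun_cond (hs : MeasurableSet s)
    (hXY : IndepFun X Y μ[|s]) {A : Set α} {B : Set β} (hA : MeasurableSet A)
    (hB : MeasurableSet B) (hpos : 0 < pr μ (X ⁻¹' A ∩ s)) :
    prCond μ (Y ⁻¹' B) (X ⁻¹' A ∩ s) = prCond μ (Y ⁻¹' B) s := by
  have hind := congrArg ENNReal.toReal (hXY.measure_inter_preimage_eq_mul A B hA hB)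
  simp only [cond_apply hs, ENNReal.toReal_mul, ENNReal.toReal_inv, ← measureReal_def] at hind
  rw [pr_eq_measureReal, Set.inter_comm] at hpos
  have hspos : 0 < μ.real s := hpos.trans_le (measureReal_mono Set.inter_subset_left)
  simp only [prCond, pr_eq_measureReal]
  rw [Set.inter_comm (X ⁻¹' A), Set.inter_comm (Y ⁻¹' B) s, Set.inter_left_comm,
    Set.inter_comm (Y ⁻¹' B), div_eq_div_iff hpos.ne' hspos.ne']
  field_simp at hind
  linarith

end ConditionalIndependence

section Compliance

variable {Ω : Type*} {D1 D0 Z D : Ω → ℝ}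

lemma NTset_eq_preimage : NTset D1 D0 = (fun ω => (D1 ω, D0 ω)) ⁻¹' {(0, 0)} := by
  ext ω
  simp [NTset, Prod.ext_iff]

lemma treatment_eq_zero_iff_mem_NTset {ω : Ω} (hD0v : D0 ω = 0 ∨ D0 ω = 1)
    (hD : D ω = D1 ω * Z ω + D0 ω * (1 - Z ω)) (hmono : D0 ω ≤ D1 ω) (hZ : Z ω = 1) :
    D ω = 0 ↔ ω ∈ NTset D1 D0 := by
  rw [hD, hZ, mul_one, sub_self, mul_zero, add_zero]
  constructor
  · intro h1
    rcases hD0v with h0 | h0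
    · exact ⟨h1, h0⟩
    · linarith
  · exact And.left

lemma evEq_treatment_inter_ae_eq_NTset_inter [MeasurableSpace Ω] {μ : Measure Ω}
    (hD0v : ∀ ω, D0 ω = 0 ∨ D0 ω = 1) (hD : ∀ ω, D ω = D1 ω * Z ω + D0 ω * (1 - Z ω))
    (hmono : ∀ᵐ ω ∂μ, D0 ω ≤ D1 ω) (C : Set Ω) :
    (evEq D 0 ∩ (evEq Z 1 ∩ C) : Set Ω) =ᵐ[μ] (NTset D1 D0 ∩ (evEq Z 1 ∩ C) : Set Ω) := by
  filter_upwards [hmono] with ω hω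
  apply propext
  exact and_congr_left fun hZC => treatment_eq_zero_iff_mem_NTset (hD0v ω) (hD ω) hω hZC.1

end Compliance

theorem never_takers_identified_general
    {Ω : Type*} [MeasurableSpace Ω] (μ : Measure Ω) [IsProbabilityMeasure μ]
    (D1 D0 Z W : Ω → ℝ)
    (hD0v : ∀ ω, D0 ω = 0 ∨ D0 ω = 1)
    (hWm : Measurable W)
    (D : Ω → ℝ) (hD : ∀ ω, D ω = D1 ω * Z ω + D0 ω * (1 - Z ω))
    (hmono : ∀ᵐ ω ∂μ, D0 ω ≤ D1 ω)
    (hCI2 : ∀ w' : ℝ, IndepFun Z (fun ω => (D1 ω, D0 ω)) (μ[|evEq W w']))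
    (w : ℝ)
    (hpos : 0 < pr μ (evEq Z 1 ∩ evEq W w)) :
    prCond μ (evEq D 0) (evEq Z 1 ∩ evEq W w) = prCond μ (NTset D1 D0) (evEq W w) := by
  calc prCond μ (evEq D 0) (evEq Z 1 ∩ evEq W w)
      = prCond μ (NTset D1 D0) (evEq Z 1 ∩ evEq W w) :=
        prCond_congr_left_of_inter_ae_eq (evEq_treatment_inter_ae_eq_NTset_inter hD0v hD hmono _)
    _ = prCond μ (NTset D1 D0) (evEq W w) := by
        rw [NTset_eq_preimage]
        exact prCond_preimage_inter_eq_of_indepFun_cond (hWm (measurableSet_singleton w))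
          (hCI2 w) (measurableSet_singleton 1) (measurableSet_singleton _) hpos

/-- identification of the probability of never takers. -/
theorem never_takers_identified
    {Ω : Type*} [MeasurableSpace Ω] (μ : Measure Ω) [IsProbabilityMeasure μ]
    (D1 D0 Z W : Ω → ℝ)
    (hD1v : ∀ ω, D1 ω = 0 ∨ D1 ω = 1) (hD0v : ∀ ω, D0 ω = 0 ∨ D0 ω = 1)
    (hZv : ∀ ω, Z ω = 0 ∨ Z ω = 1) (hWv : ∀ ω, W ω = 0 ∨ W ω = 1)
    (hD1m : Measurable D1) (hD0m : Measurable D0) (hZm : Measurable Z) (hWm : Measurable W)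
    (D : Ω → ℝ) (hD : ∀ ω, D ω = D1 ω * Z ω + D0 ω * (1 - Z ω))
    (hmono : ∀ᵐ ω ∂μ, D0 ω ≤ D1 ω)
    (hCI2 : ∀ w' : ℝ, IndepFun Z (fun ω => (D1 ω, D0 ω)) (μ[|evEq W w']))
    (w : ℝ) (hw : w = 0 ∨ w = 1)
    (hpos : 0 < pr μ (evEq Z 1 ∩ evEq W w)) :
    prCond μ (evEq D 0) (evEq Z 1 ∩ evEq W w) = prCond μ (NTset D1 D0) (evEq W w) :=
  never_takers_identified_general μ D1 D0 Z W hD0v hWm D hD hmono hCI2 w hpos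
end

section
/- Under the setup, suppose D₁ ≥ D₀ almost surely, Z is conditionally independent of (D₁, D₀) given W, and P(Z = z, W = w) > 0 for z ∈ {0,1} and a given w ∈ {0,1}. Then P(CP | W = w) = P(D = 1 | Z = 1, W = w) − P(D = 1 | Z = 0, W = w), i.e., the probability of being a complier given W = w is identified as the difference of observed treatment probabilities between Z = 1 and Z = 0 within W = w. -/
open MeasureTheory ProbabilityTheory

private lemma ennreal_cancel {t x y : ENNReal} (h0 : t ≠ 0) (ht : t ≠ ⊤)
    (h : t⁻¹ * x = t⁻¹ * y) : x = y := by
  calc x = t * (t⁻¹ * x) := by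
            rw [← mul_assoc, ENNReal.mul_inv_cancel h0 ht, one_mul]
    _ = t * (t⁻¹ * y) := by rw [h]
    _ = y := by rw [← mul_assoc, ENNReal.mul_inv_cancel h0 ht, one_mul]

/-- identification of the probability of compliers. -/
theorem compliers_identified
    {Ω : Type*} [MeasurableSpace Ω] (μ : Measure Ω) [IsProbabilityMeasure μ]
    (D1 D0 Z W : Ω → ℝ)
    (hD1v : ∀ ω, D1 ω = 0 ∨ D1 ω = 1) (hD0v : ∀ ω, D0 ω = 0 ∨ D0 ω = 1)
    (hZv : ∀ ω, Z ω = 0 ∨ Z ω = 1) (hWv : ∀ ω, W ω = 0 ∨ W ω = 1)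
    (hD1m : Measurable D1) (hD0m : Measurable D0) (hZm : Measurable Z) (hWm : Measurable W)
    (D : Ω → ℝ) (hD : ∀ ω, D ω = D1 ω * Z ω + D0 ω * (1 - Z ω))
    (hmono : ∀ᵐ ω ∂μ, D0 ω ≤ D1 ω)
    (hCI2 : ∀ w' : ℝ, IndepFun Z (fun ω => (D1 ω, D0 ω)) (μ[|evEq W w']))
    (w : ℝ) (hw : w = 0 ∨ w = 1)
    (hpos : ∀ z : ℝ, z = 0 ∨ z = 1 → 0 < pr μ (evEq Z z ∩ evEq W w)) :
    prCond μ (CPset D1 D0) (evEq W w)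
      = prCond μ (evEq D 1) (evEq Z 1 ∩ evEq W w)
        - prCond μ (evEq D 1) (evEq Z 0 ∩ evEq W w) := by
  classical
  have hWset : MeasurableSet (evEq W w) := hWm (measurableSet_singleton w)
  have hpos' : ∀ z : ℝ, z = 0 ∨ z = 1 → 0 < μ (evEq Z z ∩ evEq W w) := fun z hz =>
    (ENNReal.toReal_pos_iff.mp (hpos z hz)).1
  have hWpos : μ (evEq W w) ≠ 0 :=
    (lt_of_lt_of_le (hpos' 1 (Or.inr rfl)) (measure_mono Set.inter_subset_right)).ne'
  have hWfin : μ (evEq W w) ≠ ⊤ := measure_ne_top μ _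
  have hinv0 : (μ (evEq W w))⁻¹ ≠ 0 := ENNReal.inv_ne_zero.mpr hWfin
  have hinvt : (μ (evEq W w))⁻¹ ≠ ⊤ := ENNReal.inv_ne_top.mpr hWpos
  set μ' := μ[|evEq W w] with hmu'
  have happ : ∀ X : Set Ω, μ' X = (μ (evEq W w))⁻¹ * μ (evEq W w ∩ X) := fun X =>
    ProbabilityTheory.cond_apply hWset μ X
  have hμ'fin : ∀ X : Set Ω, μ' X ≠ ⊤ := by
    intro X
    rw [happ]
    exact ENNReal.mul_ne_top hinvt (measure_ne_top μ _)
  -- independence consequences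
  have hind := hCI2 w
  have hind1 : ∀ z : ℝ, μ' (evEq Z z ∩ evEq D1 1) = μ' (evEq Z z) * μ' (evEq D1 1) := by
    intro z
    exact hind.measure_inter_preimage_eq_mul {z} (Prod.fst ⁻¹' {1})
      (measurableSet_singleton z) (measurable_fst (measurableSet_singleton 1))
  have hind0 : ∀ z : ℝ, μ' (evEq Z z ∩ evEq D0 1) = μ' (evEq Z z) * μ' (evEq D0 1) := by
    intro z
    exact hind.measure_inter_preimage_eq_mul {z} (Prod.snd ⁻¹' {1})
      (measurableSet_singleton z) (measurable_snd (measurableSet_singleton 1))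
  -- from conditional independence: unconditional product formula
  have hkey : ∀ (A B : Set Ω), μ' (A ∩ B) = μ' A * μ' B →
      μ (B ∩ (A ∩ evEq W w)) = μ (A ∩ evEq W w) * μ' B := by
    intro A B h
    rw [happ (A ∩ B), happ A] at h
    rw [mul_assoc] at h
    have h2 : μ (evEq W w ∩ (A ∩ B)) = μ (evEq W w ∩ A) * μ' B :=
      ennreal_cancel hWpos hWfin h
    have hs1 : B ∩ (A ∩ evEq W w) = evEq W w ∩ (A ∩ B) := by
      ext ω; simp only [Set.mem_inter_iff]; tauto
    have hs2 : A ∩ evEq W w = evEq W w ∩ A := Set.inter_comm _ _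
    rw [hs1, hs2, h2]
  -- computing the conditional probabilities
  have hstep : ∀ (z : ℝ), z = 0 ∨ z = 1 → ∀ (f : Ω → ℝ),
      μ' (evEq Z z ∩ evEq f 1) = μ' (evEq Z z) * μ' (evEq f 1) →
      prCond μ (evEq f 1) (evEq Z z ∩ evEq W w) = (μ' (evEq f 1)).toReal := by
    intro z hz f hf
    have h := hkey (evEq Z z) (evEq f 1) hf
    unfold prCond pr
    rw [h, ENNReal.toReal_mul]
    have hc : (μ (evEq Z z ∩ evEq W w)).toReal ≠ 0 := (hpos z hz).ne'
    field_simp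
  -- rewrite D-events as D1/D0-events
  have hset1 : evEq D 1 ∩ (evEq Z 1 ∩ evEq W w) = evEq D1 1 ∩ (evEq Z 1 ∩ evEq W w) := by
    ext ω
    simp only [evEq, Set.mem_inter_iff, Set.mem_setOf_eq]
    constructor
    · rintro ⟨h1, h2, h3⟩
      refine ⟨?_, h2, h3⟩
      rw [hD ω, h2] at h1; linarith
    · rintro ⟨h1, h2, h3⟩
      refine ⟨?_, h2, h3⟩
      rw [hD ω, h2]; linarith
  have hset0 : evEq D 1 ∩ (evEq Z 0 ∩ evEq W w) = evEq D0 1 ∩ (evEq Z 0 ∩ evEq W w) := by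
    ext ω
    simp only [evEq, Set.mem_inter_iff, Set.mem_setOf_eq]
    constructor
    · rintro ⟨h1, h2, h3⟩
      refine ⟨?_, h2, h3⟩
      rw [hD ω, h2] at h1; linarith
    · rintro ⟨h1, h2, h3⟩
      refine ⟨?_, h2, h3⟩
      rw [hD ω, h2]; linarith
  have hP1 : prCond μ (evEq D 1) (evEq Z 1 ∩ evEq W w) = (μ' (evEq D1 1)).toReal := by
    unfold prCond
    rw [show pr μ (evEq D 1 ∩ (evEq Z 1 ∩ evEq W w))
        = pr μ (evEq D1 1 ∩ (evEq Z 1 ∩ evEq W w)) from by rw [pr, pr, hset1]]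
    exact hstep 1 (Or.inr rfl) D1 (hind1 1)
  have hP0 : prCond μ (evEq D 1) (evEq Z 0 ∩ evEq W w) = (μ' (evEq D0 1)).toReal := by
    unfold prCond
    rw [show pr μ (evEq D 1 ∩ (evEq Z 0 ∩ evEq W w))
        = pr μ (evEq D0 1 ∩ (evEq Z 0 ∩ evEq W w)) from by rw [pr, pr, hset0]]
    exact hstep 0 (Or.inl rfl) D0 (hind0 0)
  -- LHS equals μ'(CP)
  have hLHS : prCond μ (CPset D1 D0) (evEq W w) = (μ' (CPset D1 D0)).toReal := by
    unfold prCond pr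
    rw [happ, ENNReal.toReal_mul, ENNReal.toReal_inv,
      Set.inter_comm (evEq W w) (CPset D1 D0)]
    have : (μ (evEq W w)).toReal ≠ 0 :=
      (ENNReal.toReal_pos hWpos hWfin).ne'
    field_simp
  rw [hLHS, hP1, hP0]
  -- now pure μ' computation
  have hac : μ' ≪ μ := ProbabilityTheory.cond_absolutelyContinuous
  have hmono' : ∀ᵐ ω ∂μ', D0 ω ≤ D1 ω := hac.ae_le hmono
  -- D1=1 splits into CP and D0=1
  have hsplit : evEq D1 1 = CPset D1 D0 ∪ (evEq D1 1 ∩ evEq D0 1) := by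
    ext ω
    simp only [evEq, CPset, Set.mem_union, Set.mem_inter_iff, Set.mem_setOf_eq]
    rcases hD0v ω with h | h <;> simp [h] <;> tauto
  have hdisj : Disjoint (CPset D1 D0) (evEq D1 1 ∩ evEq D0 1) := by
    rw [Set.disjoint_left]
    rintro ω ⟨_, h0⟩ ⟨_, h1⟩
    simp only [evEq, Set.mem_setOf_eq] at h1
    rw [h0] at h1
    norm_num at h1
  have hmeasCP : MeasurableSet (CPset D1 D0) := by
    have : CPset D1 D0 = D1 ⁻¹' {1} ∩ D0 ⁻¹' {0} := rfl
    rw [this]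
    exact (hD1m (measurableSet_singleton 1)).inter (hD0m (measurableSet_singleton 0))
  have hmeas11 : MeasurableSet (evEq D1 1 ∩ evEq D0 1) :=
    (hD1m (measurableSet_singleton 1)).inter (hD0m (measurableSet_singleton 1))
  have hsum : μ' (evEq D1 1) = μ' (CPset D1 D0) + μ' (evEq D1 1 ∩ evEq D0 1) := by
    conv_lhs => rw [hsplit]
    exact measure_union hdisj hmeas11
  -- monotonicity: {D1=1} ∩ {D0=1} =ᵐ {D0=1}
  have haeeq : (evEq D1 1 ∩ evEq D0 1 : Set Ω) =ᵐ[μ'] evEq D0 1 := by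
    rw [Filter.eventuallyEq_set]
    filter_upwards [hmono'] with ω hω
    simp only [evEq, Set.mem_inter_iff, Set.mem_setOf_eq]
    constructor
    · rintro ⟨_, h⟩; exact h
    · intro h
      refine ⟨?_, h⟩
      rcases hD1v ω with h1 | h1
      · rw [h, h1] at hω; linarith
      · exact h1
  have h11 : μ' (evEq D1 1 ∩ evEq D0 1) = μ' (evEq D0 1) := measure_congr haeeq
  rw [h11] at hsum
  have := ENNReal.toReal_add (hμ'fin (CPset D1 D0)) (hμ'fin (evEq D0 1))
  rw [← hsum] at this
  rw [this]
  ring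
end

section
/- Under the setup, suppose D₁ ≥ D₀ almost surely, for all d, z ∈ {0,1} the pair (Z, W) is conditionally independent of Y_{d,z} given (D₁, D₀), Z is conditionally independent of (D₁, D₀) given W, P(Z = 1, W = w) > 0, and P(AT) > 0 and P(CP) > 0. Then E[Y·D | Z = 1, W = w] = E[Y_{1,1} | AT]·P(AT | W = w) + E[Y_{1,1} | CP]·P(CP | W = w). -/
open MeasureTheory ProbabilityTheory

/-!
On `{Z = 1}` the product `Y·D` equals `Y₁₁` on always takers and compliers and vanishes on
never takers. For each of these two groups `G`, independence of `(Z, W)` and `Y₁₁` given `G`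
factors `∫_{Z = 1, W = w} 1_G Y₁₁` as `P(Z = 1, W = w, G) · E[Y₁₁ | G]`, and independence
of `Z` and `(D₁, D₀)` given `W = w` factors
`P(Z = 1, W = w, G) = P(Z = 1, W = w) · P(G | W = w)`.
-/

section Conditioning

variable {Ω : Type*} [MeasurableSpace Ω] {μ : Measure Ω} [IsFiniteMeasure μ] {G : Set Ω}

theorem setIntegral_inter_eq_measureReal_mul_setIntegral_cond (hG : MeasurableSet G)
    (A : Set Ω) (f : Ω → ℝ) :
    ∫ x in A ∩ G, f x ∂μ = μ.real G * ∫ x in A, f x ∂μ[|G] := by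
  rcases eq_or_ne (μ G) 0 with hG0 | hG0
  · rw [setIntegral_measure_zero _ (measure_inter_null_of_null_right A hG0),
      measureReal_def, hG0, ENNReal.toReal_zero, zero_mul]
  · rw [ProbabilityTheory.cond, Measure.restrict_smul, Measure.restrict_restrict' hG,
      integral_smul_measure, ENNReal.toReal_inv, smul_eq_mul, ← mul_assoc, measureReal_def,
      mul_inv_cancel₀ (ENNReal.toReal_ne_zero.2 ⟨hG0, measure_ne_top μ G⟩), one_mul]

theorem measureReal_inter_eq_measureReal_mul_cond (hG : MeasurableSet G) (A : Set Ω) :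
    μ.real (A ∩ G) = μ.real G * (μ[|G]).real A := by
  rw [measureReal_def, measureReal_def, measureReal_def, ← ENNReal.toReal_mul, mul_comm,
    cond_mul_eq_inter hG, Set.inter_comm]

theorem pr_mul_cexp (hG : MeasurableSet G) (f : Ω → ℝ) :
    pr μ G * cexp μ G f = ∫ x in G, f x ∂μ := by
  rw [pr, cexp, ← measureReal_def]
  simpa using (setIntegral_inter_eq_measureReal_mul_setIntegral_cond hG Set.univ f).symm

theorem setIntegral_preimage_inter_eq_pr_mul_cexp_of_indepFun {β : Type*} [MeasurableSpace β]
    {p : Ω → β} {f : Ω → ℝ} {s : Set β} (hG : MeasurableSet G) (hp : Measurable p)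
    (hs : MeasurableSet s) (hf : AEMeasurable f μ) (hpf : IndepFun p f μ[|G]) :
    ∫ x in p ⁻¹' s ∩ G, f x ∂μ = pr μ (p ⁻¹' s ∩ G) * cexp μ G f := by
  have hfG : AEMeasurable f μ[|G] := hf.mono_ac cond_absolutelyContinuous
  have hsplit : ∫ x in p ⁻¹' s, f x ∂μ[|G] = (μ[|G]).real (p ⁻¹' s) * ∫ x, f x ∂μ[|G] :=
    Indep.setIntegral_eq_mul (f := id) hp.comap_le hpf hfG ⟨s, hs, rfl⟩
      aestronglyMeasurable_id
  rw [setIntegral_inter_eq_measureReal_mul_setIntegral_cond hG, hsplit, pr, ← measureReal_def,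
    measureReal_inter_eq_measureReal_mul_cond hG, cexp, mul_assoc]

theorem pr_preimage_inter_eq_pr_mul_prCond_of_indepFun {β γ : Type*} [MeasurableSpace β]
    [MeasurableSpace γ] {X : Ω → β} {V : Ω → γ} {s : Set β} {t : Set γ} (hG : MeasurableSet G)
    (hs : MeasurableSet s) (ht : MeasurableSet t) (hXV : IndepFun X V μ[|G]) :
    pr μ (X ⁻¹' s ∩ G ∩ V ⁻¹' t) = pr μ (X ⁻¹' s ∩ G) * prCond μ (V ⁻¹' t) G := by
  have hprod : (μ[|G]).real (X ⁻¹' s ∩ V ⁻¹' t)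
      = (μ[|G]).real (X ⁻¹' s) * (μ[|G]).real (V ⁻¹' t) := by
    rw [measureReal_def, hXV.measure_inter_preimage_eq_mul s t hs ht, ENNReal.toReal_mul]; rfl
  simp only [pr, prCond, ← measureReal_def]
  rw [Set.inter_right_comm, measureReal_inter_eq_measureReal_mul_cond hG,
    measureReal_inter_eq_measureReal_mul_cond hG, measureReal_inter_eq_measureReal_mul_cond hG,
    hprod]
  rcases eq_or_ne (μ.real G) 0 with h | h
  · simp [h]
  · field_simp

end Conditioning

theorem outcome_mul_treatment_eq_indicator {Ω : Type*} {Y : Fin 2 → Fin 2 → Ω → ℝ}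
    {D1 D0 Z D Yo : Ω → ℝ} {ω : Ω} (hD1v : D1 ω = 0 ∨ D1 ω = 1) (hD0v : D0 ω = 0 ∨ D0 ω = 1)
    (hD : D ω = D1 ω * Z ω + D0 ω * (1 - Z ω))
    (hYo : Yo ω = (Y 1 1 ω * Z ω + Y 1 0 ω * (1 - Z ω)) * D ω
      + (Y 0 1 ω * Z ω + Y 0 0 ω * (1 - Z ω)) * (1 - D ω))
    (hZ : Z ω = 1) :
    Yo ω * D ω = (ATset D1 D0 ∪ CPset D1 D0).indicator (Y 1 1) ω := by
  rw [hYo, hD, hZ]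
  rcases hD1v with h1 | h1 <;> rcases hD0v with h0 | h0 <;>
    simp [Set.indicator, ATset, CPset, h1, h0]

theorem YD_given_Z1_decomposition_general
    {Ω : Type*} [MeasurableSpace Ω] (μ : Measure Ω) [IsProbabilityMeasure μ]
    (Y : Fin 2 → Fin 2 → Ω → ℝ) (D1 D0 Z W : Ω → ℝ)
    (hYint : ∀ d z, Integrable (Y d z) μ)
    (hD1v : ∀ ω, D1 ω = 0 ∨ D1 ω = 1) (hD0v : ∀ ω, D0 ω = 0 ∨ D0 ω = 1)
    (hD1m : Measurable D1) (hD0m : Measurable D0) (hZm : Measurable Z) (hWm : Measurable W)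
    (D : Ω → ℝ) (hD : ∀ ω, D ω = D1 ω * Z ω + D0 ω * (1 - Z ω))
    (Yo : Ω → ℝ)
    (hYo : ∀ ω, Yo ω = (Y 1 1 ω * Z ω + Y 1 0 ω * (1 - Z ω)) * D ω
      + (Y 0 1 ω * Z ω + Y 0 0 ω * (1 - Z ω)) * (1 - D ω))
    (hCI1 : ∀ (d z : Fin 2) (i j : ℝ),
      IndepFun (fun ω => (Z ω, W ω)) (Y d z) (μ[|{ω | D1 ω = i ∧ D0 ω = j}]))
    (hCI2 : ∀ w' : ℝ, IndepFun Z (fun ω => (D1 ω, D0 ω)) (μ[|evEq W w']))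
    (w : ℝ)
    (hpos : 0 < pr μ (evEq Z 1 ∩ evEq W w)) :
    cexp μ (evEq Z 1 ∩ evEq W w) (fun ω => Yo ω * D ω)
      = cexp μ (ATset D1 D0) (fun ω => Y 1 1 ω) * prCond μ (ATset D1 D0) (evEq W w)
        + cexp μ (CPset D1 D0) (fun ω => Y 1 1 ω) * prCond μ (CPset D1 D0) (evEq W w) := by
  set B := evEq Z 1 ∩ evEq W w
  have hD1D0 : Measurable fun ω => (D1 ω, D0 ω) := hD1m.prodMk hD0m
  have hB : MeasurableSet B := (hZm.prodMk hWm) (.prod (.singleton 1) (.singleton w))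
  have hAT : MeasurableSet (ATset D1 D0) := hD1D0 (.prod (.singleton 1) (.singleton 1))
  have hCP : MeasurableSet (CPset D1 D0) := hD1D0 (.prod (.singleton 1) (.singleton 0))
  have hdisj : Disjoint (B ∩ ATset D1 D0) (B ∩ CPset D1 D0) :=
    Set.disjoint_left.2 fun x ⟨_, _, h⟩ ⟨_, _, h'⟩ => one_ne_zero (h.symm.trans h')
  have hsplit : ∫ x in B, Yo x * D x ∂μ
      = ∫ x in B ∩ ATset D1 D0, Y 1 1 x ∂μ + ∫ x in B ∩ CPset D1 D0, Y 1 1 x ∂μ := by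
    rw [setIntegral_congr_fun hB fun x hx => outcome_mul_treatment_eq_indicator (hD1v x)
        (hD0v x) (hD x) (hYo x) hx.1, setIntegral_indicator (hAT.union hCP),
      Set.inter_union_distrib_left, setIntegral_union hdisj (hB.inter hCP)
        (hYint 1 1).integrableOn (hYint 1 1).integrableOn]
  have hgroup : ∀ i j : ℝ, ∫ x in B ∩ {ω | D1 ω = i ∧ D0 ω = j}, Y 1 1 x ∂μ
      = pr μ B * prCond μ {ω | D1 ω = i ∧ D0 ω = j} (evEq W w)
        * cexp μ {ω | D1 ω = i ∧ D0 ω = j} (Y 1 1) := fun i j => by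
    have hG := hD1D0 (.prod (.singleton i) (.singleton j))
    have hint := setIntegral_preimage_inter_eq_pr_mul_cexp_of_indepFun hG (hZm.prodMk hWm)
        (.prod (.singleton (1 : ℝ)) (.singleton w)) (hYint 1 1).aemeasurable (hCI1 1 1 i j)
    have hprob := pr_preimage_inter_eq_pr_mul_prCond_of_indepFun (hWm (.singleton w))
        (.singleton (1 : ℝ)) (.prod (.singleton i) (.singleton j)) (hCI2 w)
    exact hint.trans (congrArg (· * _) hprob)
  refine mul_left_cancel₀ hpos.ne' ?_
  rw [pr_mul_cexp hB, hsplit]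
  unfold ATset CPset
  rw [hgroup 1 1, hgroup 1 0]
  ring

/-- mixture decomposition of `E[Y·D | Z = 1, W = w]`. -/
theorem YD_given_Z1_decomposition
    {Ω : Type*} [MeasurableSpace Ω] (μ : Measure Ω) [IsProbabilityMeasure μ]
    (Y : Fin 2 → Fin 2 → Ω → ℝ) (D1 D0 Z W : Ω → ℝ)
    (hYint : ∀ d z, Integrable (Y d z) μ) (hYmeas : ∀ d z, Measurable (Y d z))
    (hD1v : ∀ ω, D1 ω = 0 ∨ D1 ω = 1) (hD0v : ∀ ω, D0 ω = 0 ∨ D0 ω = 1)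
    (hZv : ∀ ω, Z ω = 0 ∨ Z ω = 1) (hWv : ∀ ω, W ω = 0 ∨ W ω = 1)
    (hD1m : Measurable D1) (hD0m : Measurable D0) (hZm : Measurable Z) (hWm : Measurable W)
    (D : Ω → ℝ) (hD : ∀ ω, D ω = D1 ω * Z ω + D0 ω * (1 - Z ω))
    (Yo : Ω → ℝ)
    (hYo : ∀ ω, Yo ω = (Y 1 1 ω * Z ω + Y 1 0 ω * (1 - Z ω)) * D ω
      + (Y 0 1 ω * Z ω + Y 0 0 ω * (1 - Z ω)) * (1 - D ω))
    (hmono : ∀ᵐ ω ∂μ, D0 ω ≤ D1 ω)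
    (hCI1 : ∀ (d z : Fin 2) (i j : ℝ),
      IndepFun (fun ω => (Z ω, W ω)) (Y d z) (μ[|{ω | D1 ω = i ∧ D0 ω = j}]))
    (hCI2 : ∀ w' : ℝ, IndepFun Z (fun ω => (D1 ω, D0 ω)) (μ[|evEq W w']))
    (w : ℝ) (hw : w = 0 ∨ w = 1)
    (hpos : 0 < pr μ (evEq Z 1 ∩ evEq W w))
    (hAT : 0 < pr μ (ATset D1 D0)) (hCP : 0 < pr μ (CPset D1 D0)) :
    cexp μ (evEq Z 1 ∩ evEq W w) (fun ω => Yo ω * D ω)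
      = cexp μ (ATset D1 D0) (fun ω => Y 1 1 ω) * prCond μ (ATset D1 D0) (evEq W w)
        + cexp μ (CPset D1 D0) (fun ω => Y 1 1 ω) * prCond μ (CPset D1 D0) (evEq W w) :=
  YD_given_Z1_decomposition_general μ Y D1 D0 Z W hYint hD1v hD0v hD1m hD0m hZm hWm D hD Yo hYo hCI1
    hCI2 w hpos
end

section
/- Under the setup, suppose D₁ ≥ D₀ almost surely, for all d, z ∈ {0,1} the pair (Z, W) is conditionally independent of Y_{d,z} given (D₁, D₀), Z is conditionally independent of (D₁, D₀) given W, P(Z = 0, W = w) > 0, and P(AT) > 0. Then E[Y·D | Z = 0, W = w] = E[Y_{1,0} | AT]·P(AT | W = w). -/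
open MeasureTheory ProbabilityTheory

/-!
On `{Z = 0}` the observed treatment is `D₀`, so `Y·D = Y₁₀·D₀`, and by monotonicity `D₀ = 1`
exactly on the always takers; hence `E[Y·D | Z = 0, W = w]` is `P(Z = 0, W = w)⁻¹` times the
integral of `Y₁₀` over `AT ∩ {Z = 0, W = w}`. Independence of `(Z, W)` and `Y₁₀` within `AT`
factors that integral as `P(AT, Z = 0, W = w) · E[Y₁₀ | AT]`, and independence of `Z` and the
type `(D₁, D₀)` given `W` gives `P(AT, Z = 0, W = w) = P(Z = 0, W = w) · P(AT | W = w)`.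
-/

lemma cexp_eq_inv_mul_setIntegral {Ω : Type*} [MeasurableSpace Ω] (μ : Measure Ω) (B : Set Ω)
    (f : Ω → ℝ) :
    cexp μ B f = (μ.real B)⁻¹ * ∫ ω in B, f ω ∂μ := by
  rw [cexp, ProbabilityTheory.cond, integral_smul_measure, ENNReal.toReal_inv, smul_eq_mul,
    measureReal_def]

lemma measure_smul_cond {Ω : Type*} [MeasurableSpace Ω] (μ : Measure Ω) [IsFiniteMeasure μ]
    (A : Set Ω) :
    μ A • μ[|A] = μ.restrict A := by
  obtain hA | hA := eq_or_ne (μ A) 0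
  · simp [hA, Measure.restrict_eq_zero.mpr hA]
  · rw [ProbabilityTheory.cond, smul_smul, ENNReal.mul_inv_cancel hA (measure_ne_top μ A),
      one_smul]

section ConditionalMeasure

variable {Ω : Type*} [MeasurableSpace Ω] {μ : Measure Ω} [IsFiniteMeasure μ] {A : Set Ω}

lemma measureReal_mul_cond_apply {s : Set Ω} (hs : MeasurableSet s) :
    μ.real A * (μ[|A]).real s = μ.real (s ∩ A) := by
  rw [measureReal_def, measureReal_def, measureReal_def, ← ENNReal.toReal_mul, ← smul_eq_mul,
    ← Measure.smul_apply, measure_smul_cond, Measure.restrict_apply hs]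

lemma setIntegral_inter_eq_of_indepFun_cond {β : Type*} [MeasurableSpace β] {g : Ω → β}
    {f : Ω → ℝ} {T : Set β} (hg : Measurable g) (hT : MeasurableSet T)
    (hf : AEStronglyMeasurable f (μ[|A])) (hind : IndepFun g f (μ[|A])) :
    ∫ ω in g ⁻¹' T ∩ A, f ω ∂μ = μ.real (g ⁻¹' T ∩ A) * ∫ ω, f ω ∂(μ[|A]) := by
  have hS : MeasurableSet (g ⁻¹' T) := hg hT
  have hindS : IndepFun ((g ⁻¹' T).indicator (1 : Ω → ℝ)) f (μ[|A]) := by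
    have hcomp : (g ⁻¹' T).indicator (1 : Ω → ℝ) = T.indicator 1 ∘ g := by
      ext ω
      by_cases h : g ω ∈ T <;> simp [h]
    rw [hcomp]
    exact hind.comp (measurable_const.indicator hT) measurable_id
  have hprod : (g ⁻¹' T).indicator (1 : Ω → ℝ) * f = (g ⁻¹' T).indicator f := by
    ext ω
    by_cases h : ω ∈ g ⁻¹' T <;> simp [h]
  have hsplit : ∫ ω in g ⁻¹' T, f ω ∂(μ[|A]) = (μ[|A]).real (g ⁻¹' T) * ∫ ω, f ω ∂(μ[|A]) := by
    have := hindS.integral_mul_eq_mul_integral (aestronglyMeasurable_const.indicator hS) hf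
    rwa [hprod, integral_indicator hS, integral_indicator_one hS] at this
  calc ∫ ω in g ⁻¹' T ∩ A, f ω ∂μ
      = μ.real A * ∫ ω in g ⁻¹' T, f ω ∂(μ[|A]) := by
        rw [← Measure.restrict_restrict hS, ← measure_smul_cond μ A, Measure.restrict_smul,
          integral_smul_measure, smul_eq_mul, measureReal_def]
    _ = μ.real (g ⁻¹' T ∩ A) * ∫ ω, f ω ∂(μ[|A]) := by
        rw [hsplit, ← mul_assoc, measureReal_mul_cond_apply hS]

lemma measureReal_inter_mul_eq_of_indepFun_cond {α β : Type*} [MeasurableSpace α]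
    [MeasurableSpace β] {X : Ω → α} {Y : Ω → β} {T : Set α} {U : Set β}
    (hX : Measurable X) (hY : Measurable Y) (hind : IndepFun X Y (μ[|A]))
    (hT : MeasurableSet T) (hU : MeasurableSet U) :
    μ.real (X ⁻¹' T ∩ Y ⁻¹' U ∩ A) * μ.real A
      = μ.real (X ⁻¹' T ∩ A) * μ.real (Y ⁻¹' U ∩ A) := by
  have key : (μ[|A]).real (X ⁻¹' T ∩ Y ⁻¹' U)
      = (μ[|A]).real (X ⁻¹' T) * (μ[|A]).real (Y ⁻¹' U) := by
    simp only [measureReal_def, hind.measure_inter_preimage_eq_mul T U hT hU, ENNReal.toReal_mul]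
  rw [← measureReal_mul_cond_apply (A := A) ((hX hT).inter (hY hU)),
    ← measureReal_mul_cond_apply (A := A) (hX hT), ← measureReal_mul_cond_apply (A := A) (hY hU),
    key]
  ring

end ConditionalMeasure

lemma outcome_mul_treatment_eq_indicator_ATset {Ω : Type*} {Y : Fin 2 → Fin 2 → Ω → ℝ}
    {D1 D0 Z D Yo : Ω → ℝ} {ω : Ω} (hD1v : D1 ω = 0 ∨ D1 ω = 1) (hD0v : D0 ω = 0 ∨ D0 ω = 1)
    (hmono : D0 ω ≤ D1 ω) (hZ : Z ω = 0) (hD : D ω = D1 ω * Z ω + D0 ω * (1 - Z ω))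
    (hYo : Yo ω = (Y 1 1 ω * Z ω + Y 1 0 ω * (1 - Z ω)) * D ω
      + (Y 0 1 ω * Z ω + Y 0 0 ω * (1 - Z ω)) * (1 - D ω)) :
    Yo ω * D ω = (ATset D1 D0).indicator (Y 1 0) ω := by
  rw [hYo, hD, hZ]
  rcases hD0v with h0 | h0
  · have hAT : ω ∉ ATset D1 D0 := fun h => by simp [ATset, h0] at h
    simp [h0, hAT]
  · have h1 : D1 ω = 1 := hD1v.resolve_left fun h => by linarith
    simp [ATset, h0, h1]

theorem YD_given_Z0_decomposition_general
    {Ω : Type*} [MeasurableSpace Ω] (μ : Measure Ω) [IsProbabilityMeasure μ]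
    (Y : Fin 2 → Fin 2 → Ω → ℝ) (D1 D0 Z W : Ω → ℝ)
    (hYmeas : ∀ d z, Measurable (Y d z))
    (hD1v : ∀ ω, D1 ω = 0 ∨ D1 ω = 1) (hD0v : ∀ ω, D0 ω = 0 ∨ D0 ω = 1)
    (hD1m : Measurable D1) (hD0m : Measurable D0) (hZm : Measurable Z) (hWm : Measurable W)
    (D : Ω → ℝ) (hD : ∀ ω, D ω = D1 ω * Z ω + D0 ω * (1 - Z ω))
    (Yo : Ω → ℝ)
    (hYo : ∀ ω, Yo ω = (Y 1 1 ω * Z ω + Y 1 0 ω * (1 - Z ω)) * D ω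
      + (Y 0 1 ω * Z ω + Y 0 0 ω * (1 - Z ω)) * (1 - D ω))
    (hmono : ∀ᵐ ω ∂μ, D0 ω ≤ D1 ω)
    (hCI1 : ∀ (d z : Fin 2) (i j : ℝ),
      IndepFun (fun ω => (Z ω, W ω)) (Y d z) (μ[|{ω | D1 ω = i ∧ D0 ω = j}]))
    (hCI2 : ∀ w' : ℝ, IndepFun Z (fun ω => (D1 ω, D0 ω)) (μ[|evEq W w']))
    (w : ℝ)
    (hpos : 0 < pr μ (evEq Z 0 ∩ evEq W w)) :
    cexp μ (evEq Z 0 ∩ evEq W w) (fun ω => Yo ω * D ω)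
      = cexp μ (ATset D1 D0) (fun ω => Y 1 0 ω) * prCond μ (ATset D1 D0) (evEq W w) := by
  set A := ATset D1 D0
  set S := evEq Z 0 ∩ evEq W w
  have hS_preimage : (fun ω => (Z ω, W ω)) ⁻¹' {(0, w)} = S := by
    ext ω
    simp [S, evEq, Prod.ext_iff]
  have hA_preimage : (fun ω => (D1 ω, D0 ω)) ⁻¹' {(1, 1)} = A := by
    ext ω
    simp [A, ATset, Prod.ext_iff]
  have hSm : MeasurableSet S := hS_preimage ▸ hZm.prodMk hWm (measurableSet_singleton _)
  have hAm : MeasurableSet A := hA_preimage ▸ hD1m.prodMk hD0m (measurableSet_singleton _)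
  have hintegrand : ∀ᵐ ω ∂μ, ω ∈ S → Yo ω * D ω = A.indicator (Y 1 0) ω := by
    filter_upwards [hmono] with ω hmonoω hω
    exact outcome_mul_treatment_eq_indicator_ATset (hD1v ω) (hD0v ω) hmonoω hω.1 (hD ω) (hYo ω)
  have hAT_integral :
      ∫ ω in S ∩ A, Y 1 0 ω ∂μ = μ.real (S ∩ A) * cexp μ A (fun ω => Y 1 0 ω) := by
    have := setIntegral_inter_eq_of_indepFun_cond (hZm.prodMk hWm) (measurableSet_singleton (0, w))
      (hYmeas 1 0).aestronglyMeasurable (hCI1 1 0 1 1)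
    rwa [hS_preimage] at this
  have hAT_prob : μ.real (S ∩ A) * μ.real (evEq W w) = μ.real S * μ.real (A ∩ evEq W w) := by
    have := measureReal_inter_mul_eq_of_indepFun_cond hZm (hD1m.prodMk hD0m) (hCI2 w)
      (measurableSet_singleton 0) (measurableSet_singleton (1, 1))
    rwa [hA_preimage, Set.inter_right_comm] at this
  have hS_pos : 0 < μ.real S := hpos
  have hW_pos : 0 < μ.real (evEq W w) := hS_pos.trans_le (measureReal_mono Set.inter_subset_right)
  rw [cexp_eq_inv_mul_setIntegral, setIntegral_congr_ae hSm hintegrand, setIntegral_indicator hAm,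
    hAT_integral, prCond, pr, pr, ← measureReal_def, ← measureReal_def]
  field_simp
  linear_combination cexp μ A (fun ω => Y 1 0 ω) * hAT_prob

/-- `E[Y·D | Z = 0, W = w]` only involves always takers. -/
theorem YD_given_Z0_decomposition
    {Ω : Type*} [MeasurableSpace Ω] (μ : Measure Ω) [IsProbabilityMeasure μ]
    (Y : Fin 2 → Fin 2 → Ω → ℝ) (D1 D0 Z W : Ω → ℝ)
    (hYint : ∀ d z, Integrable (Y d z) μ) (hYmeas : ∀ d z, Measurable (Y d z))
    (hD1v : ∀ ω, D1 ω = 0 ∨ D1 ω = 1) (hD0v : ∀ ω, D0 ω = 0 ∨ D0 ω = 1)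
    (hZv : ∀ ω, Z ω = 0 ∨ Z ω = 1) (hWv : ∀ ω, W ω = 0 ∨ W ω = 1)
    (hD1m : Measurable D1) (hD0m : Measurable D0) (hZm : Measurable Z) (hWm : Measurable W)
    (D : Ω → ℝ) (hD : ∀ ω, D ω = D1 ω * Z ω + D0 ω * (1 - Z ω))
    (Yo : Ω → ℝ)
    (hYo : ∀ ω, Yo ω = (Y 1 1 ω * Z ω + Y 1 0 ω * (1 - Z ω)) * D ω
      + (Y 0 1 ω * Z ω + Y 0 0 ω * (1 - Z ω)) * (1 - D ω))
    (hmono : ∀ᵐ ω ∂μ, D0 ω ≤ D1 ω)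
    (hCI1 : ∀ (d z : Fin 2) (i j : ℝ),
      IndepFun (fun ω => (Z ω, W ω)) (Y d z) (μ[|{ω | D1 ω = i ∧ D0 ω = j}]))
    (hCI2 : ∀ w' : ℝ, IndepFun Z (fun ω => (D1 ω, D0 ω)) (μ[|evEq W w']))
    (w : ℝ) (hw : w = 0 ∨ w = 1)
    (hpos : 0 < pr μ (evEq Z 0 ∩ evEq W w))
    (hAT : 0 < pr μ (ATset D1 D0)) :
    cexp μ (evEq Z 0 ∩ evEq W w) (fun ω => Yo ω * D ω)
      = cexp μ (ATset D1 D0) (fun ω => Y 1 0 ω) * prCond μ (ATset D1 D0) (evEq W w) :=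
  YD_given_Z0_decomposition_general μ Y D1 D0 Z W hYmeas hD1v hD0v hD1m hD0m hZm hWm D hD Yo hYo
    hmono hCI1 hCI2 w hpos
end

section
/- Under the setup, suppose D₁ ≥ D₀ almost surely, for all d, z ∈ {0,1} the pair (Z, W) is conditionally independent of Y_{d,z} given (D₁, D₀), Z is conditionally independent of (D₁, D₀) given W, P(Z = z, W = w) > 0 for z ∈ {0,1}, P(AT) > 0, P(CP) > 0, and the always-taker average direct effect satisfies E[Y_{1,1} − Y_{1,0} | AT] = ρ₁. Then r₁(w) := E[Y·D | Z = 1, W = w] − E[Y·D | Z = 0, W = w] = ρ₁·P(AT | W = w) + E[Y_{1,1} | CP]·P(CP | W = w). -/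
/-!
On `{Z = 1}` the treated outcome `Y·D` equals `Y₁₁` on always takers and compliers and vanishes
elsewhere; on `{Z = 0}` it equals `Y₁₀` on always takers and on defiers, a null set by
monotonicity. For a principal stratum `G`, independence of `(Z, W)` and the outcome given `G`
gives `E[Y·1_G | Z = z, W = w] = E[Y | G] · P(G | Z = z, W = w)`, and independence of `Z` and
`(D₁, D₀)` given `W` turns `P(G | Z = z, W = w)` into `P(G | W = w)`. In the difference the two
always-taker terms combine into `ρ₁ · P(AT | W = w)`.
-/

open MeasureTheory ProbabilityTheory

section

variable {Ω : Type*} [MeasurableSpace Ω] {μ : Measure Ω}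

lemma integral_cond_eq_inv_mul_setIntegral (s : Set Ω) (f : Ω → ℝ) :
    ∫ ω, f ω ∂μ[|s] = (μ s).toReal⁻¹ * ∫ ω in s, f ω ∂μ := by
  rw [ProbabilityTheory.cond, integral_smul_measure, ENNReal.toReal_inv, smul_eq_mul]

lemma integral_cond_preimage_of_indepFun {β : Type*} [MeasurableSpace β] [IsFiniteMeasure μ]
    {X : Ω → β} {f : Ω → ℝ} (hXf : IndepFun X f μ) (hX : Measurable X)
    (hf : AEStronglyMeasurable f μ) {s : Set β} (hs : MeasurableSet s)
    (hμs : μ (X ⁻¹' s) ≠ 0) :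
    ∫ ω, f ω ∂μ[|X ⁻¹' s] = ∫ ω, f ω ∂μ := by
  have hφ : Measurable (s.indicator (1 : β → ℝ)) := measurable_const.indicator hs
  have hmul : ∫ ω, (X ⁻¹' s).indicator 1 ω * f ω ∂μ
      = (∫ ω, (X ⁻¹' s).indicator (1 : Ω → ℝ) ω ∂μ) * ∫ ω, f ω ∂μ :=
    (hXf.comp hφ measurable_id).integral_fun_mul_eq_mul_integral
      (hφ.comp hX).aestronglyMeasurable hf
  simp only [← Set.indicator_mul_left, Pi.one_apply, one_mul, integral_indicator (hX hs),
    setIntegral_const, smul_eq_mul, mul_one] at hmul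
  rw [integral_cond_eq_inv_mul_setIntegral, hmul, measureReal_def, ← mul_assoc,
    inv_mul_cancel₀ (ENNReal.toReal_ne_zero.2 ⟨hμs, measure_ne_top μ _⟩), one_mul]

lemma cond_preimage_apply_of_indepFun {β γ : Type*} [MeasurableSpace β] [MeasurableSpace γ]
    [IsFiniteMeasure μ] {X : Ω → β} {V : Ω → γ} (hXV : IndepFun X V μ) (hX : Measurable X)
    {s : Set β} {t : Set γ} (hs : MeasurableSet s) (ht : MeasurableSet t)
    (hμs : μ (X ⁻¹' s) ≠ 0) :
    μ[V ⁻¹' t | X ⁻¹' s] = μ (V ⁻¹' t) := by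
  rw [cond_apply (hX hs), hXV.measure_inter_preimage_eq_mul s t hs ht, ← mul_assoc,
    ENNReal.inv_mul_cancel hμs (measure_ne_top μ _), one_mul]

lemma cexp_congr {A : Set Ω} (hA : MeasurableSet A) {f g : Ω → ℝ} (h : Set.EqOn f g A) :
    cexp μ A f = cexp μ A g := by
  rw [cexp, cexp, integral_cond_eq_inv_mul_setIntegral, integral_cond_eq_inv_mul_setIntegral,
    setIntegral_congr_fun hA h]

lemma cexp_add (A : Set Ω) {f g : Ω → ℝ} (hf : Integrable f μ) (hg : Integrable g μ) :
    cexp μ A (fun ω => f ω + g ω) = cexp μ A f + cexp μ A g := by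
  simp only [cexp, integral_cond_eq_inv_mul_setIntegral, integral_add hf.restrict hg.restrict,
    mul_add]

lemma cexp_sub (A : Set Ω) {f g : Ω → ℝ} (hf : Integrable f μ) (hg : Integrable g μ) :
    cexp μ A (fun ω => f ω - g ω) = cexp μ A f - cexp μ A g := by
  simp only [cexp, integral_cond_eq_inv_mul_setIntegral, integral_sub hf.restrict hg.restrict,
    mul_sub]

lemma cexp_eq_zero_of_ae_eq_zero (A : Set Ω) {f : Ω → ℝ} (h : f =ᵐ[μ] 0) :
    cexp μ A f = 0 := by
  rw [cexp, integral_cond_eq_inv_mul_setIntegral, integral_eq_zero_of_ae (ae_restrict_of_ae h),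
    mul_zero]

lemma prCond_eq_toReal_cond {A B : Set Ω} (hB : MeasurableSet B) :
    prCond μ A B = (μ[A | B]).toReal := by
  rw [prCond, pr, pr, cond_apply hB, ENNReal.toReal_mul, ENNReal.toReal_inv, Set.inter_comm,
    div_eq_inv_mul]

lemma cexp_indicator_eq_prCond_mul [IsFiniteMeasure μ] {S G : Set Ω} (hG : MeasurableSet G)
    (f : Ω → ℝ) :
    cexp μ S (G.indicator f) = prCond μ G S * cexp μ (S ∩ G) f := by
  simp only [cexp, integral_cond_eq_inv_mul_setIntegral, prCond, pr]
  rw [setIntegral_indicator hG, Set.inter_comm G S]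
  rcases eq_or_ne (μ (S ∩ G)) 0 with h0 | h0
  · simp [setIntegral_measure_zero _ h0]
  · have : (μ (S ∩ G)).toReal ≠ 0 := ENNReal.toReal_ne_zero.2 ⟨h0, measure_ne_top μ _⟩
    field_simp

lemma cexp_indicator_preimage_of_condIndep {γ : Type*} [MeasurableSpace γ] [IsFiniteMeasure μ]
    {Z W : Ω → ℝ} {V : Ω → γ} {f : Ω → ℝ} (hZ : Measurable Z) (hW : Measurable W)
    (hf : AEStronglyMeasurable f μ) {z w : ℝ} {t : Set γ} (hV : MeasurableSet (V ⁻¹' t))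
    (ht : MeasurableSet t) (hZWf : IndepFun (fun ω => (Z ω, W ω)) f (μ[|V ⁻¹' t]))
    (hZV : IndepFun Z V (μ[|evEq W w])) (hS : μ (evEq Z z ∩ evEq W w) ≠ 0) :
    cexp μ (evEq Z z ∩ evEq W w) ((V ⁻¹' t).indicator f)
      = cexp μ (V ⁻¹' t) f * prCond μ (V ⁻¹' t) (evEq W w) := by
  have hZz : MeasurableSet (evEq Z z) := hZ (measurableSet_singleton z)
  have hWw : MeasurableSet (evEq W w) := hW (measurableSet_singleton w)
  have hSZW : evEq Z z ∩ evEq W w = (fun ω => (Z ω, W ω)) ⁻¹' {(z, w)} := by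
    ext ω; simp [evEq]
  have hprCond :
      prCond μ (V ⁻¹' t) (evEq Z z ∩ evEq W w) = prCond μ (V ⁻¹' t) (evEq W w) := by
    rw [prCond_eq_toReal_cond (hZz.inter hWw), prCond_eq_toReal_cond hWw, Set.inter_comm,
      ← cond_cond_eq_cond_inter hWw hZz, show evEq Z z = Z ⁻¹' {z} from rfl,
      cond_preimage_apply_of_indepFun hZV hZ (measurableSet_singleton z) ht]
    exact (cond_pos_of_inter_ne_zero hWw (by rwa [Set.inter_comm])).ne'
  rw [cexp_indicator_eq_prCond_mul hV, ← hprCond, mul_comm]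
  rcases eq_or_ne (μ (V ⁻¹' t ∩ (evEq Z z ∩ evEq W w))) 0 with h0 | h0
  · rw [prCond, pr, h0]; simp
  · congr 1
    rw [cexp, cexp, Set.inter_comm, ← cond_cond_eq_cond_inter hV (hZz.inter hWw), hSZW,
      integral_cond_preimage_of_indepFun hZWf (hZ.prodMk hW)
        (hf.mono_ac cond_absolutelyContinuous) (measurableSet_singleton _)]
    exact (cond_pos_of_inter_ne_zero hV (by rwa [← hSZW])).ne'

lemma cexp_indicator_stratum [IsFiniteMeasure μ] {D1 D0 Z W f : Ω → ℝ} (hD1 : Measurable D1)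
    (hD0 : Measurable D0) (hZ : Measurable Z) (hW : Measurable W)
    (hf : AEStronglyMeasurable f μ) {i j z w : ℝ}
    (hZWf : IndepFun (fun ω => (Z ω, W ω)) f (μ[|{ω | D1 ω = i ∧ D0 ω = j}]))
    (hZD : IndepFun Z (fun ω => (D1 ω, D0 ω)) (μ[|evEq W w]))
    (hS : μ (evEq Z z ∩ evEq W w) ≠ 0) :
    cexp μ (evEq Z z ∩ evEq W w) ({ω | D1 ω = i ∧ D0 ω = j}.indicator f)
      = cexp μ {ω | D1 ω = i ∧ D0 ω = j} f
        * prCond μ {ω | D1 ω = i ∧ D0 ω = j} (evEq W w) := by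
  have hG : {ω | D1 ω = i ∧ D0 ω = j} = (fun ω => (D1 ω, D0 ω)) ⁻¹' {(i, j)} := by
    ext ω; simp
  rw [hG] at hZWf ⊢
  exact cexp_indicator_preimage_of_condIndep hZ hW hf
    ((hD1.prodMk hD0) (measurableSet_singleton _)) (measurableSet_singleton _) hZWf hZD hS

end

theorem r1_decomposition_general
    {Ω : Type*} [MeasurableSpace Ω] (μ : Measure Ω) [IsProbabilityMeasure μ]
    (Y : Fin 2 → Fin 2 → Ω → ℝ) (D1 D0 Z W : Ω → ℝ)
    (hYint : ∀ d z, Integrable (Y d z) μ)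
    (hD1v : ∀ ω, D1 ω = 0 ∨ D1 ω = 1) (hD0v : ∀ ω, D0 ω = 0 ∨ D0 ω = 1)
    (hD1m : Measurable D1) (hD0m : Measurable D0) (hZm : Measurable Z) (hWm : Measurable W)
    (D : Ω → ℝ) (hD : ∀ ω, D ω = D1 ω * Z ω + D0 ω * (1 - Z ω))
    (Yo : Ω → ℝ)
    (hYo : ∀ ω, Yo ω = (Y 1 1 ω * Z ω + Y 1 0 ω * (1 - Z ω)) * D ω
      + (Y 0 1 ω * Z ω + Y 0 0 ω * (1 - Z ω)) * (1 - D ω))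
    (hmono : ∀ᵐ ω ∂μ, D0 ω ≤ D1 ω)
    (hCI1 : ∀ (d z : Fin 2) (i j : ℝ),
      IndepFun (fun ω => (Z ω, W ω)) (Y d z) (μ[|{ω | D1 ω = i ∧ D0 ω = j}]))
    (hCI2 : ∀ w' : ℝ, IndepFun Z (fun ω => (D1 ω, D0 ω)) (μ[|evEq W w']))
    (w : ℝ)
    (hpos : ∀ z : ℝ, z = 0 ∨ z = 1 → 0 < pr μ (evEq Z z ∩ evEq W w))
    (ρ1 : ℝ) (hρ1 : cexp μ (ATset D1 D0) (fun ω => Y 1 1 ω - Y 1 0 ω) = ρ1) :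
    cexp μ (evEq Z 1 ∩ evEq W w) (fun ω => Yo ω * D ω)
      - cexp μ (evEq Z 0 ∩ evEq W w) (fun ω => Yo ω * D ω)
      = ρ1 * prCond μ (ATset D1 D0) (evEq W w)
        + cexp μ (CPset D1 D0) (fun ω => Y 1 1 ω) * prCond μ (CPset D1 D0) (evEq W w) := by
  simp only [ATset, CPset] at hρ1 ⊢
  have hSm (z : ℝ) : MeasurableSet (evEq Z z ∩ evEq W w) :=
    (hZm (measurableSet_singleton z)).inter (hWm (measurableSet_singleton w))
  have hGm (i j : ℝ) : MeasurableSet {ω | D1 ω = i ∧ D0 ω = j} :=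
    (hD1m (measurableSet_singleton i)).inter (hD0m (measurableSet_singleton j))
  have stratum (d z' : Fin 2) (i j z : ℝ) (hz : z = 0 ∨ z = 1) :=
    cexp_indicator_stratum (z := z) hD1m hD0m hZm hWm (hYint d z').aestronglyMeasurable
      (hCI1 d z' i j) (hCI2 w) fun h0 => by simpa [pr, h0] using hpos z hz
  have hDF : {ω | D1 ω = 0 ∧ D0 ω = 1}.indicator (Y 1 0) =ᵐ[μ] 0 := by
    filter_upwards [hmono] with ω hω
    exact Set.indicator_of_notMem (fun h => by linarith [h.1, h.2]) _
  have hZ1 : Set.EqOn (fun ω => Yo ω * D ω)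
      (fun ω => {ω | D1 ω = 1 ∧ D0 ω = 1}.indicator (Y 1 1) ω
        + {ω | D1 ω = 1 ∧ D0 ω = 0}.indicator (Y 1 1) ω) (evEq Z 1 ∩ evEq W w) := by
    rintro ω ⟨hz : Z ω = 1, -⟩
    rcases hD1v ω with h1 | h1 <;> rcases hD0v ω with h0 | h0 <;> simp [hYo ω, hD ω, hz, h1, h0]
  have hZ0 : Set.EqOn (fun ω => Yo ω * D ω)
      (fun ω => {ω | D1 ω = 1 ∧ D0 ω = 1}.indicator (Y 1 0) ω
        + {ω | D1 ω = 0 ∧ D0 ω = 1}.indicator (Y 1 0) ω) (evEq Z 0 ∩ evEq W w) := by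
    rintro ω ⟨hz : Z ω = 0, -⟩
    rcases hD1v ω with h1 | h1 <;> rcases hD0v ω with h0 | h0 <;> simp [hYo ω, hD ω, hz, h1, h0]
  rw [cexp_congr (hSm 1) hZ1, cexp_congr (hSm 0) hZ0,
    cexp_add _ ((hYint 1 1).indicator (hGm 1 1)) ((hYint 1 1).indicator (hGm 1 0)),
    cexp_add _ ((hYint 1 0).indicator (hGm 1 1)) ((hYint 1 0).indicator (hGm 0 1)),
    cexp_eq_zero_of_ae_eq_zero _ hDF, stratum 1 1 1 1 1 (.inr rfl),
    stratum 1 1 1 0 1 (.inr rfl), stratum 1 0 1 1 0 (.inl rfl), ← hρ1,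
    cexp_sub _ (hYint 1 1) (hYint 1 0)]
  ring

/-- the contrast `r₁(w)` decomposes into direct and complier terms. -/
theorem r1_decomposition
    {Ω : Type*} [MeasurableSpace Ω] (μ : Measure Ω) [IsProbabilityMeasure μ]
    (Y : Fin 2 → Fin 2 → Ω → ℝ) (D1 D0 Z W : Ω → ℝ)
    (hYint : ∀ d z, Integrable (Y d z) μ) (hYmeas : ∀ d z, Measurable (Y d z))
    (hD1v : ∀ ω, D1 ω = 0 ∨ D1 ω = 1) (hD0v : ∀ ω, D0 ω = 0 ∨ D0 ω = 1)
    (hZv : ∀ ω, Z ω = 0 ∨ Z ω = 1) (hWv : ∀ ω, W ω = 0 ∨ W ω = 1)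
    (hD1m : Measurable D1) (hD0m : Measurable D0) (hZm : Measurable Z) (hWm : Measurable W)
    (D : Ω → ℝ) (hD : ∀ ω, D ω = D1 ω * Z ω + D0 ω * (1 - Z ω))
    (Yo : Ω → ℝ)
    (hYo : ∀ ω, Yo ω = (Y 1 1 ω * Z ω + Y 1 0 ω * (1 - Z ω)) * D ω
      + (Y 0 1 ω * Z ω + Y 0 0 ω * (1 - Z ω)) * (1 - D ω))
    (hmono : ∀ᵐ ω ∂μ, D0 ω ≤ D1 ω)
    (hCI1 : ∀ (d z : Fin 2) (i j : ℝ),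
      IndepFun (fun ω => (Z ω, W ω)) (Y d z) (μ[|{ω | D1 ω = i ∧ D0 ω = j}]))
    (hCI2 : ∀ w' : ℝ, IndepFun Z (fun ω => (D1 ω, D0 ω)) (μ[|evEq W w']))
    (w : ℝ) (hw : w = 0 ∨ w = 1)
    (hpos : ∀ z : ℝ, z = 0 ∨ z = 1 → 0 < pr μ (evEq Z z ∩ evEq W w))
    (hAT : 0 < pr μ (ATset D1 D0)) (hCP : 0 < pr μ (CPset D1 D0))
    (ρ1 : ℝ) (hρ1 : cexp μ (ATset D1 D0) (fun ω => Y 1 1 ω - Y 1 0 ω) = ρ1) :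
    cexp μ (evEq Z 1 ∩ evEq W w) (fun ω => Yo ω * D ω)
      - cexp μ (evEq Z 0 ∩ evEq W w) (fun ω => Yo ω * D ω)
      = ρ1 * prCond μ (ATset D1 D0) (evEq W w)
        + cexp μ (CPset D1 D0) (fun ω => Y 1 1 ω) * prCond μ (CPset D1 D0) (evEq W w) :=
  r1_decomposition_general μ Y D1 D0 Z W hYint hD1v hD0v hD1m hD0m hZm hWm D hD Yo hYo hmono hCI1
    hCI2 w hpos ρ1 hρ1
end

section
/- Under the setup, suppose D₁ ≥ D₀ almost surely, for all d, z ∈ {0,1} the pair (Z, W) is conditionally independent of Y_{d,z} given (D₁, D₀), Z is conditionally independent of (D₁, D₀) given W, P(Z = z, W = 1) > 0 for z ∈ {0,1}, and P(CP | W = 1) > 0. Then E[D | Z = 1, W = 1] − E[D | Z = 0, W = 1] = P(CP | W = 1) and E[Y | Z = 1, W = 1] − E[Y | Z = 0, W = 1] = r₁(1) + r₀(1), so that the conditional Wald ratio satisfies IV₁ := (E[Y | Z = 1, W = 1] − E[Y | Z = 0, W = 1]) / (E[D | Z = 1, W = 1] − E[D | Z = 0, W = 1]) = (r₁(1) + r₀(1))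 / P(CP | W = 1), where r₁(w) = E[Y·D | Z = 1, W = w] − E[Y·D | Z = 0, W = w] and r₀(w) = E[Y·(1−D) | Z = 1, W = w] − E[Y·(1−D) | Z = 0, W = w]. -/
open MeasureTheory ProbabilityTheory

/-!
Conditionally on `W = 1` the instrument `Z` is independent of the compliance type `(D₁, D₀)`,
so `E[D | Z = 1, W = 1] = P(D₁ = 1 | W = 1)` and `E[D | Z = 0, W = 1] = P(D₀ = 1 | W = 1)`.
Under monotonicity `{D₁ = 1}` is, up to a null set, the disjoint union of `{D₀ = 1}` and the
compliers, which gives the first stage. The reduced form splits as `Y = Y·D + Y·(1 - D)`.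
-/

lemma one_sub_eq_zero_or_one {x : ℝ} (hx : x = 0 ∨ x = 1) : 1 - x = 0 ∨ 1 - x = 1 := by
  rcases hx with rfl | rfl <;> norm_num

section

variable {Ω : Type*} [MeasurableSpace Ω] {μ : Measure Ω}

theorem MeasureTheory.Integrable.mul_zero_or_one {f g : Ω → ℝ} (hf : Integrable f μ)
    (hg : Measurable g) (hg01 : ∀ ω, g ω = 0 ∨ g ω = 1) :
    Integrable (fun ω => f ω * g ω) μ :=
  hf.mul_bdd (c := 1) hg.aestronglyMeasurable
    (ae_of_all _ fun ω => by rcases hg01 ω with h | h <;> simp [h])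

lemma integrable_mul_add_mul_one_sub {f₁ f₀ g : Ω → ℝ} (hf₁ : Integrable f₁ μ)
    (hf₀ : Integrable f₀ μ) (hg : Measurable g) (hg01 : ∀ ω, g ω = 0 ∨ g ω = 1) :
    Integrable (fun ω => f₁ ω * g ω + f₀ ω * (1 - g ω)) μ :=
  (hf₁.mul_zero_or_one hg hg01).add
    (hf₀.mul_zero_or_one (measurable_const.sub hg) fun ω => one_sub_eq_zero_or_one (hg01 ω))

theorem MeasureTheory.Integrable.cond {E : Type*} [NormedAddCommGroup E] {f : Ω → E}
    (hf : Integrable f μ) (A : Set Ω) : Integrable f μ[|A] := by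
  by_cases hA : μ A = 0
  · simp [cond_eq_zero_of_meas_eq_zero hA]
  · exact hf.restrict.smul_measure (ENNReal.inv_ne_top.mpr hA)

lemma cexp_eq_cexp_mul_add_cexp_mul_one_sub {f g : Ω → ℝ} (hf : Integrable f μ)
    (hg : Measurable g) (hg01 : ∀ ω, g ω = 0 ∨ g ω = 1) (A : Set Ω) :
    cexp μ A f = cexp μ A (fun ω => f ω * g ω) + cexp μ A (fun ω => f ω * (1 - g ω)) := by
  have h1 := (hf.mul_zero_or_one hg hg01).cond A
  have h2 : Integrable (fun ω => f ω * (1 - g ω)) μ[|A] :=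
    (hf.mul_zero_or_one (measurable_const.sub hg) fun ω => one_sub_eq_zero_or_one (hg01 ω)).cond A
  rw [cexp, cexp, cexp, ← integral_add h1 h2]
  congr 1
  funext ω
  ring

lemma cexp_eq_prCond_of_zero_or_one {f : Ω → ℝ} (hf : Measurable f)
    (hf01 : ∀ ω, f ω = 0 ∨ f ω = 1) (A : Set Ω) :
    cexp μ A f = prCond μ (evEq f 1) A := by
  have hS : MeasurableSet (evEq f 1) := hf (measurableSet_singleton 1)
  have hf_ind : (fun ω => f ω) = (evEq f 1).indicator 1 := by
    funext ω
    rcases hf01 ω with h | h <;> simp [evEq, h]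
  rw [cexp, hf_ind, integral_indicator_one hS,
    measureReal_def, cond_apply' hS, ENNReal.toReal_mul, ENNReal.toReal_inv, prCond, pr, pr,
    Set.inter_comm, inv_mul_eq_div]

lemma prCond_evEq_congr {f g : Ω → ℝ} {C : Set Ω} (hfg : Set.EqOn f g C) (c : ℝ) :
    prCond μ (evEq f c) C = prCond μ (evEq g c) C := by
  have : evEq f c ∩ C = evEq g c ∩ C := by
    ext ω
    simp only [evEq, Set.mem_inter_iff, Set.mem_ofPred_eq]
    exact ⟨fun h => ⟨hfg h.2 ▸ h.1, h.2⟩, fun h => ⟨(hfg h.2).symm ▸ h.1, h.2⟩⟩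
  rw [prCond, prCond, this]

lemma prCond_inter_eq_of_indepFun {α β : Type*} [MeasurableSpace α] [MeasurableSpace β]
    [IsFiniteMeasure μ] {X : Ω → α} {V : Ω → β} {C : Set Ω} {s : Set α} {t : Set β}
    (hC : MeasurableSet C) (hXV : IndepFun X V μ[|C]) (hs : MeasurableSet s)
    (ht : MeasurableSet t) (hXC : μ (X ⁻¹' s ∩ C) ≠ 0) :
    prCond μ (V ⁻¹' t) (X ⁻¹' s ∩ C) = prCond μ (V ⁻¹' t) C := by
  have hC0 : μ C ≠ 0 := fun h => hXC (measure_mono_null Set.inter_subset_right h)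
  have hmul := congrArg ENNReal.toReal (hXV.measure_inter_preimage_eq_mul s t hs ht)
  simp only [cond_apply hC, ENNReal.toReal_mul, ENNReal.toReal_inv] at hmul
  have hCpos : 0 < (μ C).toReal := ENNReal.toReal_pos hC0 (measure_ne_top μ C)
  have hXCpos : 0 < (μ (C ∩ X ⁻¹' s)).toReal := by
    rw [Set.inter_comm]
    exact ENNReal.toReal_pos hXC (measure_ne_top μ _)
  have hinter : V ⁻¹' t ∩ (X ⁻¹' s ∩ C) = C ∩ (X ⁻¹' s ∩ V ⁻¹' t) := by
    ext ω
    simp only [Set.mem_inter_iff]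
    tauto
  rw [prCond, prCond, pr, pr, pr, pr, hinter, Set.inter_comm (X ⁻¹' s) C,
    Set.inter_comm (V ⁻¹' t) C, div_eq_div_iff hXCpos.ne' hCpos.ne']
  field_simp at hmul
  linarith

lemma prCond_evEq_one_eq_add_prCond_CPset [IsFiniteMeasure μ] {D1 D0 : Ω → ℝ}
    (hD1m : Measurable D1) (hD0m : Measurable D0) (hD1v : ∀ ω, D1 ω = 0 ∨ D1 ω = 1)
    (hD0v : ∀ ω, D0 ω = 0 ∨ D0 ω = 1) (hmono : ∀ᵐ ω ∂μ, D0 ω ≤ D1 ω)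
    {C : Set Ω} (hC : MeasurableSet C) :
    prCond μ (evEq D1 1) C = prCond μ (evEq D0 1) C + prCond μ (CPset D1 D0) C := by
  have hCP : MeasurableSet (CPset D1 D0) :=
    (hD1m (measurableSet_singleton 1)).inter (hD0m (measurableSet_singleton 0))
  have hdisj : Disjoint (evEq D0 1 ∩ C) (CPset D1 D0 ∩ C) :=
    Set.disjoint_left.mpr fun _ h h' => one_ne_zero (h.1.symm.trans h'.1.2)
  have hsplit :
      (evEq D1 1 ∩ C : Set Ω) =ᵐ[μ] (evEq D0 1 ∩ C ∪ CPset D1 D0 ∩ C : Set Ω) := by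
    filter_upwards [hmono] with ω hω
    have hD0_imp : D0 ω = 1 → D1 ω = 1 := fun h0 => (hD1v ω).resolve_left fun h1 => by linarith
    change (ω ∈ evEq D1 1 ∩ C) = (ω ∈ evEq D0 1 ∩ C ∪ CPset D1 D0 ∩ C)
    rcases hD0v ω with h0 | h0 <;> simp [evEq, CPset, h0, hD0_imp]
  simp only [prCond, pr]
  rw [measure_congr hsplit, measure_union hdisj (hCP.inter hC),
    ENNReal.toReal_add (measure_ne_top μ _) (measure_ne_top μ _), add_div]

end

theorem IV1_decomposition_general
    {Ω : Type*} [MeasurableSpace Ω] (μ : Measure Ω) [IsProbabilityMeasure μ]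
    (Y : Fin 2 → Fin 2 → Ω → ℝ) (D1 D0 Z W : Ω → ℝ)
    (hYint : ∀ d z, Integrable (Y d z) μ)
    (hD1v : ∀ ω, D1 ω = 0 ∨ D1 ω = 1) (hD0v : ∀ ω, D0 ω = 0 ∨ D0 ω = 1)
    (hZv : ∀ ω, Z ω = 0 ∨ Z ω = 1)
    (hD1m : Measurable D1) (hD0m : Measurable D0) (hZm : Measurable Z) (hWm : Measurable W)
    (D : Ω → ℝ) (hD : ∀ ω, D ω = D1 ω * Z ω + D0 ω * (1 - Z ω))
    (Yo : Ω → ℝ)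
    (hYo : ∀ ω, Yo ω = (Y 1 1 ω * Z ω + Y 1 0 ω * (1 - Z ω)) * D ω
      + (Y 0 1 ω * Z ω + Y 0 0 ω * (1 - Z ω)) * (1 - D ω))
    (hmono : ∀ᵐ ω ∂μ, D0 ω ≤ D1 ω)
    (hCI2 : ∀ w' : ℝ, IndepFun Z (fun ω => (D1 ω, D0 ω)) (μ[|evEq W w']))
    (hpos : ∀ z : ℝ, z = 0 ∨ z = 1 → 0 < pr μ (evEq Z z ∩ evEq W 1))
    (r11 r01 : ℝ)
    (hr11 : r11 = cexp μ (evEq Z 1 ∩ evEq W 1) (fun ω => Yo ω * D ω)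
      - cexp μ (evEq Z 0 ∩ evEq W 1) (fun ω => Yo ω * D ω))
    (hr01 : r01 = cexp μ (evEq Z 1 ∩ evEq W 1) (fun ω => Yo ω * (1 - D ω))
      - cexp μ (evEq Z 0 ∩ evEq W 1) (fun ω => Yo ω * (1 - D ω))) :
    cexp μ (evEq Z 1 ∩ evEq W 1) D - cexp μ (evEq Z 0 ∩ evEq W 1) D
        = prCond μ (CPset D1 D0) (evEq W 1)
      ∧ cexp μ (evEq Z 1 ∩ evEq W 1) Yo - cexp μ (evEq Z 0 ∩ evEq W 1) Yo = r11 + r01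
      ∧ (cexp μ (evEq Z 1 ∩ evEq W 1) Yo - cexp μ (evEq Z 0 ∩ evEq W 1) Yo)
          / (cexp μ (evEq Z 1 ∩ evEq W 1) D - cexp μ (evEq Z 0 ∩ evEq W 1) D)
        = (r11 + r01) / prCond μ (CPset D1 D0) (evEq W 1) := by
  have hW : MeasurableSet (evEq W 1) := hWm (measurableSet_singleton 1)
  have hZW : ∀ z : ℝ, z = 0 ∨ z = 1 → μ (evEq Z z ∩ evEq W 1) ≠ 0 :=
    fun z hz h => (hpos z hz).ne' (by simp [pr, h])
  have hDv : ∀ ω, D ω = 0 ∨ D ω = 1 := fun ω => by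
    rcases hZv ω with h | h <;> simp [hD ω, h, hD0v ω, hD1v ω]
  have hDm : Measurable D := by
    rw [show D = _ from funext hD]
    fun_prop
  have hD_one : cexp μ (evEq Z 1 ∩ evEq W 1) D = prCond μ (evEq D1 1) (evEq W 1) := by
    rw [cexp_eq_prCond_of_zero_or_one hDm hDv,
      prCond_evEq_congr (g := D1) fun ω hω => by rw [hD ω, show Z ω = 1 from hω.1]; ring]
    exact prCond_inter_eq_of_indepFun hW ((hCI2 1).comp measurable_id measurable_fst)
      (measurableSet_singleton 1) (measurableSet_singleton 1) (hZW 1 (by norm_num))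
  have hD_zero : cexp μ (evEq Z 0 ∩ evEq W 1) D = prCond μ (evEq D0 1) (evEq W 1) := by
    rw [cexp_eq_prCond_of_zero_or_one hDm hDv,
      prCond_evEq_congr (g := D0) fun ω hω => by rw [hD ω, show Z ω = 0 from hω.1]; ring]
    exact prCond_inter_eq_of_indepFun hW ((hCI2 1).comp measurable_id measurable_snd)
      (measurableSet_singleton 0) (measurableSet_singleton 1) (hZW 0 (by norm_num))
  have hfirst : cexp μ (evEq Z 1 ∩ evEq W 1) D - cexp μ (evEq Z 0 ∩ evEq W 1) D
      = prCond μ (CPset D1 D0) (evEq W 1) := by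
    rw [hD_one, hD_zero, prCond_evEq_one_eq_add_prCond_CPset hD1m hD0m hD1v hD0v hmono hW]
    ring
  have hYo_int : Integrable Yo μ := by
    have hYZ d := integrable_mul_add_mul_one_sub (hYint d 1) (hYint d 0) hZm hZv
    rw [show Yo = _ from funext hYo]
    exact integrable_mul_add_mul_one_sub (hYZ 1) (hYZ 0) hDm hDv
  have hsecond : cexp μ (evEq Z 1 ∩ evEq W 1) Yo - cexp μ (evEq Z 0 ∩ evEq W 1) Yo
      = r11 + r01 := by
    rw [hr11, hr01, cexp_eq_cexp_mul_add_cexp_mul_one_sub hYo_int hDm hDv (evEq Z 1 ∩ evEq W 1),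
      cexp_eq_cexp_mul_add_cexp_mul_one_sub hYo_int hDm hDv (evEq Z 0 ∩ evEq W 1)]
    ring
  exact ⟨hfirst, hsecond, by rw [hfirst, hsecond]⟩

/-- the conditional Wald ratio `IV₁` equals `(r₁(1) + r₀(1)) / P(CP | W = 1)`. -/
theorem IV1_decomposition
    {Ω : Type*} [MeasurableSpace Ω] (μ : Measure Ω) [IsProbabilityMeasure μ]
    (Y : Fin 2 → Fin 2 → Ω → ℝ) (D1 D0 Z W : Ω → ℝ)
    (hYint : ∀ d z, Integrable (Y d z) μ) (hYmeas : ∀ d z, Measurable (Y d z))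
    (hD1v : ∀ ω, D1 ω = 0 ∨ D1 ω = 1) (hD0v : ∀ ω, D0 ω = 0 ∨ D0 ω = 1)
    (hZv : ∀ ω, Z ω = 0 ∨ Z ω = 1) (hWv : ∀ ω, W ω = 0 ∨ W ω = 1)
    (hD1m : Measurable D1) (hD0m : Measurable D0) (hZm : Measurable Z) (hWm : Measurable W)
    (D : Ω → ℝ) (hD : ∀ ω, D ω = D1 ω * Z ω + D0 ω * (1 - Z ω))
    (Yo : Ω → ℝ)
    (hYo : ∀ ω, Yo ω = (Y 1 1 ω * Z ω + Y 1 0 ω * (1 - Z ω)) * D ω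
      + (Y 0 1 ω * Z ω + Y 0 0 ω * (1 - Z ω)) * (1 - D ω))
    (hmono : ∀ᵐ ω ∂μ, D0 ω ≤ D1 ω)
    (hCI1 : ∀ (d z : Fin 2) (i j : ℝ),
      IndepFun (fun ω => (Z ω, W ω)) (Y d z) (μ[|{ω | D1 ω = i ∧ D0 ω = j}]))
    (hCI2 : ∀ w' : ℝ, IndepFun Z (fun ω => (D1 ω, D0 ω)) (μ[|evEq W w']))
    (hpos : ∀ z : ℝ, z = 0 ∨ z = 1 → 0 < pr μ (evEq Z z ∩ evEq W 1))
    (hCPW : 0 < prCond μ (CPset D1 D0) (evEq W 1))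
    (r11 r01 : ℝ)
    (hr11 : r11 = cexp μ (evEq Z 1 ∩ evEq W 1) (fun ω => Yo ω * D ω)
      - cexp μ (evEq Z 0 ∩ evEq W 1) (fun ω => Yo ω * D ω))
    (hr01 : r01 = cexp μ (evEq Z 1 ∩ evEq W 1) (fun ω => Yo ω * (1 - D ω))
      - cexp μ (evEq Z 0 ∩ evEq W 1) (fun ω => Yo ω * (1 - D ω))) :
    cexp μ (evEq Z 1 ∩ evEq W 1) D - cexp μ (evEq Z 0 ∩ evEq W 1) D
        = prCond μ (CPset D1 D0) (evEq W 1)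
      ∧ cexp μ (evEq Z 1 ∩ evEq W 1) Yo - cexp μ (evEq Z 0 ∩ evEq W 1) Yo = r11 + r01
      ∧ (cexp μ (evEq Z 1 ∩ evEq W 1) Yo - cexp μ (evEq Z 0 ∩ evEq W 1) Yo)
          / (cexp μ (evEq Z 1 ∩ evEq W 1) D - cexp μ (evEq Z 0 ∩ evEq W 1) D)
        = (r11 + r01) / prCond μ (CPset D1 D0) (evEq W 1) :=
  IV1_decomposition_general μ Y D1 D0 Z W hYint hD1v hD0v hZv hD1m hD0m hZm hWm D hD Yo hYo hmono
    hCI2 hpos r11 r01 hr11 hr01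
end

section
/- Under the setup, suppose: D₁ ≥ D₀ almost surely; for all d, z ∈ {0,1} the pair (Z, W) is conditionally independent of Y_{d,z} given (D₁, D₀); Z is conditionally independent of (D₁, D₀) given W; 0 < P(Z = z, W = w) < 1 for all z, w ∈ {0,1}; P(CP) > 0, P(CP | W = 1) > 0, P(CP ∩ {Z = z}) > 0 for z ∈ {0,1}; and the exclusion-type condition Y_{d,1} = Y_{d,0} almost surely for d ∈ {0,1} holds (so all average direct effects are zero). Then LATE = IV₁ := (E[Y | Z = 1, W = 1] − E[Y | Z = 0, W = 1]) / (E[D | Z = 1, W = 1] − E[D | Z = 0, W = 1]). -/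
open MeasureTheory ProbabilityTheory

/-!
Given `W = 1`, the instrument `Z` is independent of the compliance type `(D₁, D₀)`, and given
each type, `(Z, W)` is independent of the potential outcomes. Monotonicity rules out defiers and
exclusion lets one replace `Y_{d,1}` by `Y_{d,0}`, so on the cell `{Z = z, W = 1}` the observed
outcome averages to `∑_T P(T | W = 1) E[Y_{d_T(z),0} | T]`, where `d_T(z)` is the treatment of
type `T` at `Z = z`. Always and never takers contribute equally to both cells, so the difference
of the two cell means is `P(CP | W = 1) · LATE`. The treatment `D` is the observed outcome for the
potential outcomes `Y_{d,z} = d`, so the same identity gives `P(CP | W = 1)` as the denominator.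
-/

lemma setOf_and_eq_preimage_prod {Ω : Type*} (D1 D0 : Ω → ℝ) (i j : ℝ) :
    {ω | D1 ω = i ∧ D0 ω = j} = (fun ω => (D1 ω, D0 ω)) ⁻¹' {(i, j)} := by
  ext; simp

lemma evEq_inter_evEq_eq_preimage_prod {Ω : Type*} (Z W : Ω → ℝ) (z w : ℝ) :
    evEq Z z ∩ evEq W w = (fun ω => (Z ω, W ω)) ⁻¹' {(z, w)} := by
  ext; simp [evEq]

lemma obs_eq_sum_indicator_typeSets {Ω : Type*} {D1 D0 Z D Yo : Ω → ℝ}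
    {Y : Fin 2 → Fin 2 → Ω → ℝ} {ω : Ω}
    (hD1 : D1 ω = 0 ∨ D1 ω = 1) (hD0 : D0 ω = 0 ∨ D0 ω = 1) (hmono : D0 ω ≤ D1 ω)
    (hD : D ω = D1 ω * Z ω + D0 ω * (1 - Z ω))
    (hYo : Yo ω = (Y 1 1 ω * Z ω + Y 1 0 ω * (1 - Z ω)) * D ω
      + (Y 0 1 ω * Z ω + Y 0 0 ω * (1 - Z ω)) * (1 - D ω))
    (hexcl1 : Y 1 1 ω = Y 1 0 ω) (hexcl0 : Y 0 1 ω = Y 0 0 ω) :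
    Yo ω = (ATset D1 D0).indicator (Y 1 0) ω + (NTset D1 D0).indicator (Y 0 0) ω
      + (CPset D1 D0).indicator (fun ω => Y 1 0 ω * Z ω + Y 0 0 ω * (1 - Z ω)) ω := by
  rcases hD1 with h1 | h1 <;> rcases hD0 with h0 | h0 <;> rw [h1, h0] at hmono <;>
    norm_num at hmono <;>
    simp [ATset, NTset, CPset, h1, h0, hYo, hD, hexcl1, hexcl0] <;> ring

namespace ProbabilityTheory

variable {Ω β : Type*} {mΩ : MeasurableSpace Ω} [MeasurableSpace β] {μ : Measure Ω}

lemma IndepFun.setIntegral_preimage_eq_mul {X : Ω → β} {f : Ω → ℝ} (h : IndepFun X f μ)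
    (hX : Measurable X) (hf : AEMeasurable f μ) {s : Set β} (hs : MeasurableSet s) :
    ∫ ω in X ⁻¹' s, f ω ∂μ = μ.real (X ⁻¹' s) * ∫ ω, f ω ∂μ :=
  Indep.setIntegral_eq_mul (f := id) hX.comap_le h hf ⟨s, hs, rfl⟩
    aestronglyMeasurable_id

lemma setIntegral_cond {T : Set Ω} (hT : MeasurableSet T) (f : Ω → ℝ) (A : Set Ω) :
    ∫ ω in A, f ω ∂μ[|T] = (μ.real T)⁻¹ * ∫ ω in A ∩ T, f ω ∂μ := by
  rw [cond, Measure.restrict_smul, integral_smul_measure, Measure.restrict_restrict' hT,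
    ENNReal.toReal_inv, smul_eq_mul, measureReal_def]

lemma integrable_cond {f : Ω → ℝ} (hf : Integrable f μ) (T : Set Ω) : Integrable f μ[|T] := by
  rcases eq_or_ne (μ T) 0 with h | h
  · simp [cond_eq_zero_of_meas_eq_zero h]
  · exact hf.restrict.smul_measure (ENNReal.inv_ne_top.2 h)

lemma measure_preimage_inter_inter_eq_of_indepFun_cond [IsFiniteMeasure μ] {γ : Type*}
    [MeasurableSpace γ] {X : Ω → β} {Y : Ω → γ} {C : Set Ω} (h : IndepFun X Y μ[|C])
    (hC : MeasurableSet C) {s : Set β} {t : Set γ} (hs : MeasurableSet s) (ht : MeasurableSet t) :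
    μ (X ⁻¹' s ∩ C ∩ Y ⁻¹' t) = μ (X ⁻¹' s ∩ C) * μ[Y ⁻¹' t | C] := by
  have key := congrArg (· * μ C) (h.measure_inter_preimage_eq_mul s t hs ht)
  rw [cond_mul_eq_inter hC, mul_right_comm, cond_mul_eq_inter hC] at key
  rwa [Set.inter_comm _ C, Set.inter_assoc]

lemma setIntegral_preimage_inter_eq_of_indepFun_cond [IsFiniteMeasure μ] {X : Ω → β} {f : Ω → ℝ}
    {T : Set Ω} (h : IndepFun X f μ[|T]) (hX : Measurable X) (hf : AEMeasurable f μ)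
    (hT : MeasurableSet T) {s : Set β} (hs : MeasurableSet s) :
    ∫ ω in X ⁻¹' s ∩ T, f ω ∂μ = μ.real (X ⁻¹' s ∩ T) * ∫ ω, f ω ∂μ[|T] := by
  rcases eq_or_ne (μ T) 0 with h0 | h0
  · have : μ (X ⁻¹' s ∩ T) = 0 := measure_mono_null Set.inter_subset_right h0
    simp [Measure.restrict_eq_zero.2 this, measureReal_def, this]
  have hT' : μ.real T ≠ 0 := (measureReal_ne_zero_iff (measure_ne_top μ T)).2 h0
  have key := h.setIntegral_preimage_eq_mul hX (hf.mono_ac cond_absolutelyContinuous) hs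
  have hc : μ[|T].real (X ⁻¹' s) = (μ.real T)⁻¹ * μ.real (X ⁻¹' s ∩ T) := by
    simp [Measure.real, cond_apply hT, ENNReal.toReal_mul, Set.inter_comm]
  rw [setIntegral_cond hT, hc] at key
  field_simp at key
  linear_combination key

end ProbabilityTheory

section IVModel

variable {Ω : Type*} [MeasurableSpace Ω] {μ : Measure Ω} {D1 D0 Z W : Ω → ℝ}

lemma measurableSet_evEq (hZ : Measurable Z) (z : ℝ) : MeasurableSet (evEq Z z) :=
  hZ (measurableSet_singleton z)

lemma prCond_eq_measureReal_cond {A B : Set Ω} (hB : MeasurableSet B) :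
    prCond μ A B = μ[|B].real A := by
  simp [prCond, pr, Measure.real, cond_apply hB, ENNReal.toReal_mul, Set.inter_comm, div_eq_inv_mul]

lemma cexp_treatmentEffect_eq_of_exclusion {T : Set Ω} {Y : Fin 2 → Fin 2 → Ω → ℝ}
    (hY : ∀ d, Integrable (Y d 0) μ) (hexcl : ∀ d : Fin 2, ∀ᵐ ω ∂μ, Y d 1 ω = Y d 0 ω) :
    cexp μ T (fun ω => (Y 1 1 ω * Z ω + Y 1 0 ω * (1 - Z ω))
        - (Y 0 1 ω * Z ω + Y 0 0 ω * (1 - Z ω)))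
      = cexp μ T (Y 1 0) - cexp μ T (Y 0 0) := by
  rw [cexp, cexp, cexp, ← integral_sub (integrable_cond (hY 1) _) (integrable_cond (hY 0) _)]
  refine integral_congr_ae ?_
  filter_upwards [cond_absolutelyContinuous.ae_le (hexcl 1),
    cond_absolutelyContinuous.ae_le (hexcl 0)] with ω h1 h0
  simp only [h1, h0]
  ring

variable [IsFiniteMeasure μ]

lemma cexp_indicator_typeSet (hD1 : Measurable D1) (hD0 : Measurable D0) (hZ : Measurable Z)
    (hW : Measurable W) (hZtype : IndepFun Z (fun ω => (D1 ω, D0 ω)) μ[|evEq W 1]) {z i j : ℝ}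
    (hA : μ (evEq Z z ∩ evEq W 1) ≠ 0) {f : Ω → ℝ} (hf : AEMeasurable f μ)
    (hf_type : IndepFun (fun ω => (Z ω, W ω)) f μ[|{ω | D1 ω = i ∧ D0 ω = j}]) :
    cexp μ (evEq Z z ∩ evEq W 1) ({ω | D1 ω = i ∧ D0 ω = j}.indicator f)
      = μ[|evEq W 1].real {ω | D1 ω = i ∧ D0 ω = j} * cexp μ {ω | D1 ω = i ∧ D0 ω = j} f := by
  have hT : MeasurableSet {ω | D1 ω = i ∧ D0 ω = j} :=
    (hD1 (measurableSet_singleton i)).inter (hD0 (measurableSet_singleton j))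
  have hA_meas := (measurableSet_evEq hZ z).inter (measurableSet_evEq hW 1)
  have hA_real : μ.real (evEq Z z ∩ evEq W 1) ≠ 0 :=
    (measureReal_ne_zero_iff (measure_ne_top μ _)).2 hA
  have hshare : μ.real (evEq Z z ∩ evEq W 1 ∩ {ω | D1 ω = i ∧ D0 ω = j})
      = μ.real (evEq Z z ∩ evEq W 1) * μ[|evEq W 1].real {ω | D1 ω = i ∧ D0 ω = j} := by
    have := measure_preimage_inter_inter_eq_of_indepFun_cond hZtype (measurableSet_evEq hW 1)
      (measurableSet_singleton z) (measurableSet_singleton (i, j))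
    rw [← setOf_and_eq_preimage_prod] at this
    rw [Measure.real, Measure.real, Measure.real, ← ENNReal.toReal_mul]
    exact congrArg ENNReal.toReal this
  have hcell := setIntegral_preimage_inter_eq_of_indepFun_cond hf_type (hZ.prodMk hW) hf hT
    (measurableSet_singleton (z, 1))
  rw [← evEq_inter_evEq_eq_preimage_prod] at hcell
  rw [cexp, cexp, ← setIntegral_univ, setIntegral_cond hA_meas, Set.univ_inter,
    setIntegral_indicator hT, hcell, hshare]
  field_simp

lemma cexp_cell_eq_sum_typeSets (hD1 : Measurable D1) (hD0 : Measurable D0) (hZ : Measurable Z)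
    (hW : Measurable W) (hZtype : IndepFun Z (fun ω => (D1 ω, D0 ω)) μ[|evEq W 1]) {z : ℝ}
    (hA : μ (evEq Z z ∩ evEq W 1) ≠ 0) {g fAT fNT fCP : Ω → ℝ}
    (hAT : Integrable fAT μ) (hNT : Integrable fNT μ) (hCP : Integrable fCP μ)
    (hAT_type : IndepFun (fun ω => (Z ω, W ω)) fAT μ[|ATset D1 D0])
    (hNT_type : IndepFun (fun ω => (Z ω, W ω)) fNT μ[|NTset D1 D0])
    (hCP_type : IndepFun (fun ω => (Z ω, W ω)) fCP μ[|CPset D1 D0])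
    (hg : g =ᵐ[μ[|evEq Z z ∩ evEq W 1]] fun ω => (ATset D1 D0).indicator fAT ω
      + (NTset D1 D0).indicator fNT ω + (CPset D1 D0).indicator fCP ω) :
    cexp μ (evEq Z z ∩ evEq W 1) g
      = μ[|evEq W 1].real (ATset D1 D0) * cexp μ (ATset D1 D0) fAT
        + μ[|evEq W 1].real (NTset D1 D0) * cexp μ (NTset D1 D0) fNT
        + μ[|evEq W 1].real (CPset D1 D0) * cexp μ (CPset D1 D0) fCP := by
  have hT : ∀ i j : ℝ, MeasurableSet {ω | D1 ω = i ∧ D0 ω = j} := fun i j =>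
    (hD1 (measurableSet_singleton i)).inter (hD0 (measurableSet_singleton j))
  have hcell : ∀ {i j : ℝ} {f : Ω → ℝ}, Integrable f μ →
      IndepFun (fun ω => (Z ω, W ω)) f μ[|{ω | D1 ω = i ∧ D0 ω = j}] →
      ∫ ω, {ω | D1 ω = i ∧ D0 ω = j}.indicator f ω ∂μ[|evEq Z z ∩ evEq W 1]
        = μ[|evEq W 1].real {ω | D1 ω = i ∧ D0 ω = j} * cexp μ {ω | D1 ω = i ∧ D0 ω = j} f :=
    fun hf hf_type => cexp_indicator_typeSet hD1 hD0 hZ hW hZtype hA hf.aemeasurable hf_type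
  have hint : ∀ {i j : ℝ} {f : Ω → ℝ}, Integrable f μ →
      Integrable ({ω | D1 ω = i ∧ D0 ω = j}.indicator f) μ[|evEq Z z ∩ evEq W 1] :=
    fun hf => (integrable_cond hf _).indicator (hT _ _)
  unfold ATset NTset CPset at *
  rw [cexp, integral_congr_ae hg, integral_add ?_ (hint hCP), integral_add (hint hAT) (hint hNT),
    hcell hAT hAT_type, hcell hNT hNT_type, hcell hCP hCP_type]
  exact (hint hAT).add (hint hNT)

lemma cexp_sub_cexp_eq_mul_of_exclusion (hD1 : Measurable D1) (hD0 : Measurable D0)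
    (hZ : Measurable Z) (hW : Measurable W) (hD1v : ∀ ω, D1 ω = 0 ∨ D1 ω = 1)
    (hD0v : ∀ ω, D0 ω = 0 ∨ D0 ω = 1) (hmono : ∀ᵐ ω ∂μ, D0 ω ≤ D1 ω)
    (hZtype : IndepFun Z (fun ω => (D1 ω, D0 ω)) μ[|evEq W 1])
    (hA1 : μ (evEq Z 1 ∩ evEq W 1) ≠ 0) (hA0 : μ (evEq Z 0 ∩ evEq W 1) ≠ 0)
    {Y : Fin 2 → Fin 2 → Ω → ℝ} {D Yo : Ω → ℝ} (hY : ∀ d, Integrable (Y d 0) μ)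
    (hY_type : ∀ d (i j : ℝ),
      IndepFun (fun ω => (Z ω, W ω)) (Y d 0) μ[|{ω | D1 ω = i ∧ D0 ω = j}])
    (hexcl : ∀ d : Fin 2, ∀ᵐ ω ∂μ, Y d 1 ω = Y d 0 ω)
    (hD : ∀ ω, D ω = D1 ω * Z ω + D0 ω * (1 - Z ω))
    (hYo : ∀ ω, Yo ω = (Y 1 1 ω * Z ω + Y 1 0 ω * (1 - Z ω)) * D ω
      + (Y 0 1 ω * Z ω + Y 0 0 ω * (1 - Z ω)) * (1 - D ω)) :
    cexp μ (evEq Z 1 ∩ evEq W 1) Yo - cexp μ (evEq Z 0 ∩ evEq W 1) Yo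
      = μ[|evEq W 1].real (CPset D1 D0)
        * (cexp μ (CPset D1 D0) (Y 1 0) - cexp μ (CPset D1 D0) (Y 0 0)) := by
  have hdecomp : ∀ᵐ ω ∂μ, Yo ω = (ATset D1 D0).indicator (Y 1 0) ω
      + (NTset D1 D0).indicator (Y 0 0) ω
      + (CPset D1 D0).indicator (fun ω => Y 1 0 ω * Z ω + Y 0 0 ω * (1 - Z ω)) ω := by
    filter_upwards [hmono, hexcl 1, hexcl 0] with ω hm h1 h0
    exact obs_eq_sum_indicator_typeSets (hD1v ω) (hD0v ω) hm (hD ω) (hYo ω) h1 h0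
  rw [cexp_cell_eq_sum_typeSets hD1 hD0 hZ hW hZtype hA1 (hY 1) (hY 0) (hY 1) (hY_type 1 1 1)
      (hY_type 0 0 0) (hY_type 1 1 0) ?_,
    cexp_cell_eq_sum_typeSets hD1 hD0 hZ hW hZtype hA0 (hY 1) (hY 0) (hY 0) (hY_type 1 1 1)
      (hY_type 0 0 0) (hY_type 0 1 0) ?_]
  · ring
  all_goals
    filter_upwards [ae_cond_mem ((measurableSet_evEq hZ _).inter (measurableSet_evEq hW 1)),
      cond_absolutelyContinuous.ae_le hdecomp] with ω hω h
    have hz : Z ω = _ := hω.1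
    by_cases hω_CP : ω ∈ CPset D1 D0 <;> simp [h, hω_CP, hz]

end IVModel

theorem late_equals_IV1_under_exclusion_general
    {Ω : Type*} [MeasurableSpace Ω] (μ : Measure Ω) [IsProbabilityMeasure μ]
    (Y : Fin 2 → Fin 2 → Ω → ℝ) (D1 D0 Z W : Ω → ℝ)
    (hYint : ∀ d z, Integrable (Y d z) μ)
    (hD1v : ∀ ω, D1 ω = 0 ∨ D1 ω = 1) (hD0v : ∀ ω, D0 ω = 0 ∨ D0 ω = 1)
    (hD1m : Measurable D1) (hD0m : Measurable D0) (hZm : Measurable Z) (hWm : Measurable W)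
    (D : Ω → ℝ) (hD : ∀ ω, D ω = D1 ω * Z ω + D0 ω * (1 - Z ω))
    (Yo : Ω → ℝ)
    (hYo : ∀ ω, Yo ω = (Y 1 1 ω * Z ω + Y 1 0 ω * (1 - Z ω)) * D ω
      + (Y 0 1 ω * Z ω + Y 0 0 ω * (1 - Z ω)) * (1 - D ω))
    (hmono : ∀ᵐ ω ∂μ, D0 ω ≤ D1 ω)
    (hCI1 : ∀ (d z : Fin 2) (i j : ℝ),
      IndepFun (fun ω => (Z ω, W ω)) (Y d z) (μ[|{ω | D1 ω = i ∧ D0 ω = j}]))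
    (hCI2 : ∀ w' : ℝ, IndepFun Z (fun ω => (D1 ω, D0 ω)) (μ[|evEq W w']))
    (hpos : ∀ z w : ℝ, z = 0 ∨ z = 1 → w = 0 ∨ w = 1 →
      0 < pr μ (evEq Z z ∩ evEq W w) ∧ pr μ (evEq Z z ∩ evEq W w) < 1)
    (hCP : 0 < pr μ (CPset D1 D0))
    (hCPW : 0 < prCond μ (CPset D1 D0) (evEq W 1))
    (hexcl : ∀ d : Fin 2, ∀ᵐ ω ∂μ, Y d 1 ω = Y d 0 ω) :
    cexp μ (CPset D1 D0)
        (fun ω => (Y 1 1 ω * Z ω + Y 1 0 ω * (1 - Z ω))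
          - (Y 0 1 ω * Z ω + Y 0 0 ω * (1 - Z ω)))
      = (cexp μ (evEq Z 1 ∩ evEq W 1) Yo - cexp μ (evEq Z 0 ∩ evEq W 1) Yo)
        / (cexp μ (evEq Z 1 ∩ evEq W 1) D - cexp μ (evEq Z 0 ∩ evEq W 1) D) := by
  have hA : ∀ z : ℝ, z = 0 ∨ z = 1 → μ (evEq Z z ∩ evEq W 1) ≠ 0 := fun z hz h => by
    simpa [pr, h] using (hpos z 1 hz (Or.inr rfl)).1
  have hCP_ne : μ (CPset D1 D0) ≠ 0 := fun h => by simp [pr, h] at hCP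
  have hp : 0 < μ[|evEq W 1].real (CPset D1 D0) :=
    prCond_eq_measureReal_cond (measurableSet_evEq hWm 1) ▸ hCPW
  have hnum := cexp_sub_cexp_eq_mul_of_exclusion hD1m hD0m hZm hWm hD1v hD0v hmono (hCI2 1)
    (hA 1 (Or.inr rfl)) (hA 0 (Or.inl rfl)) (fun d => hYint d 0) (fun d => hCI1 d 0) hexcl hD hYo
  have hden : cexp μ (evEq Z 1 ∩ evEq W 1) D - cexp μ (evEq Z 0 ∩ evEq W 1) D
      = μ[|evEq W 1].real (CPset D1 D0) := by
    have := cond_isProbabilityMeasure hCP_ne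
    rw [cexp_sub_cexp_eq_mul_of_exclusion hD1m hD0m hZm hWm hD1v hD0v hmono (hCI2 1)
      (hA 1 (Or.inr rfl)) (hA 0 (Or.inl rfl)) (Y := fun d _ _ => (d : ℝ)) (Yo := D)
      (fun _ => integrable_const _) (fun _ _ _ => indepFun_const_right _ _)
      (fun _ => ae_of_all _ fun _ => rfl) hD (fun ω => by simp)]
    simp [cexp]
  rw [cexp_treatmentEffect_eq_of_exclusion (fun d => hYint d 0) hexcl, hnum, hden]
  field_simp

/-- under exclusion, the LATE equals the conditional Wald ratio `IV₁`. -/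
theorem late_equals_IV1_under_exclusion
    {Ω : Type*} [MeasurableSpace Ω] (μ : Measure Ω) [IsProbabilityMeasure μ]
    (Y : Fin 2 → Fin 2 → Ω → ℝ) (D1 D0 Z W : Ω → ℝ)
    (hYint : ∀ d z, Integrable (Y d z) μ) (hYmeas : ∀ d z, Measurable (Y d z))
    (hD1v : ∀ ω, D1 ω = 0 ∨ D1 ω = 1) (hD0v : ∀ ω, D0 ω = 0 ∨ D0 ω = 1)
    (hZv : ∀ ω, Z ω = 0 ∨ Z ω = 1) (hWv : ∀ ω, W ω = 0 ∨ W ω = 1)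
    (hD1m : Measurable D1) (hD0m : Measurable D0) (hZm : Measurable Z) (hWm : Measurable W)
    (D : Ω → ℝ) (hD : ∀ ω, D ω = D1 ω * Z ω + D0 ω * (1 - Z ω))
    (Yo : Ω → ℝ)
    (hYo : ∀ ω, Yo ω = (Y 1 1 ω * Z ω + Y 1 0 ω * (1 - Z ω)) * D ω
      + (Y 0 1 ω * Z ω + Y 0 0 ω * (1 - Z ω)) * (1 - D ω))
    (hmono : ∀ᵐ ω ∂μ, D0 ω ≤ D1 ω)
    (hCI1 : ∀ (d z : Fin 2) (i j : ℝ),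
      IndepFun (fun ω => (Z ω, W ω)) (Y d z) (μ[|{ω | D1 ω = i ∧ D0 ω = j}]))
    (hCI2 : ∀ w' : ℝ, IndepFun Z (fun ω => (D1 ω, D0 ω)) (μ[|evEq W w']))
    (hpos : ∀ z w : ℝ, z = 0 ∨ z = 1 → w = 0 ∨ w = 1 →
      0 < pr μ (evEq Z z ∩ evEq W w) ∧ pr μ (evEq Z z ∩ evEq W w) < 1)
    (hCP : 0 < pr μ (CPset D1 D0))
    (hCPW : 0 < prCond μ (CPset D1 D0) (evEq W 1))
    (hCPZ : ∀ z : ℝ, z = 0 ∨ z = 1 → 0 < pr μ (CPset D1 D0 ∩ evEq Z z))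
    (hexcl : ∀ d : Fin 2, ∀ᵐ ω ∂μ, Y d 1 ω = Y d 0 ω) :
    cexp μ (CPset D1 D0)
        (fun ω => (Y 1 1 ω * Z ω + Y 1 0 ω * (1 - Z ω))
          - (Y 0 1 ω * Z ω + Y 0 0 ω * (1 - Z ω)))
      = (cexp μ (evEq Z 1 ∩ evEq W 1) Yo - cexp μ (evEq Z 0 ∩ evEq W 1) Yo)
        / (cexp μ (evEq Z 1 ∩ evEq W 1) D - cexp μ (evEq Z 0 ∩ evEq W 1) D) :=
  late_equals_IV1_under_exclusion_general μ Y D1 D0 Z W hYint hD1v hD0v hD1m hD0m hZm hWm D hD Yo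
    hYo hmono hCI1 hCI2 hpos hCP hCPW hexcl
end
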